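/- arXiv:2602.02187 — 7 statements merged into one kernel-verified Lean document; each statement's English description precedes it below -/
import Mathlib

section
/- For all integers r ≥ 2, 1 ≤ i ≤ r, J ≥ 0, and n ≥ 0, the dimension over ℚ of the weight-n graded component of the quotient ring S_{J+1}/P_{r,i,J} equals B_{r,i,J}(n); equivalently, HP_i^{J+1}(q) = ℬ_{r,i,J}(q) in ℚ[[q]]. -/
open PowerSeries Finset

/-- Gordon difference condition for `r`: for every `a ≥ 1`, at most `r - 1` of the parts
lie in `{a, a+1}` (equivalent to `λ_m - λ_{m+r-1} ≥ 2` for all valid `m`). -/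
def GordonCond (r : ℕ) {n : ℕ} (p : Nat.Partition n) : Prop :=
  ∀ a : ℕ, 1 ≤ a → Multiset.count a p.parts + Multiset.count (a+1) p.parts ≤ r - 1

/-- `B_{r,i,J}(n)`: number of partitions of `n` satisfying the Gordon difference condition
for `r`, with all parts `> J` and at most `i - 1` parts equal to `J + 1`. -/
noncomputable def BCount (r i J n : ℕ) : ℕ :=
  Nat.card {p : Nat.Partition n // GordonCond r p ∧ (∀ x ∈ p.parts, J < x) ∧
    Multiset.count (J+1) p.parts ≤ i - 1}

/-- `ℬ_{r,i,J}(q) = Σ_{n ≥ 0} B_{r,i,J}(n) qⁿ ∈ ℚ[[q]]`. -/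
noncomputable def Bseries (r i J : ℕ) : PowerSeries ℚ :=
  PowerSeries.mk fun n => (BCount r i J n : ℚ)

/-- Generators of the ideal `P_k^ℓ` of `S_k = ℚ[x_k, x_{k+1}, …]`: the monomial `x_k^ℓ`,
the monomials `x_k^{ℓ-s} x_{k+1}^{r-ℓ+s}` for `1 ≤ s ≤ ℓ-1`, and the monomials
`x_a^{r-t} x_{a+1}^t` for `a ≥ k+1`, `0 ≤ t ≤ r-1`. -/
def Pgens (r k ℓ : ℕ) : Set (MvPolynomial {m : ℕ // k ≤ m} ℚ) :=
  {f | f = MvPolynomial.X ⟨k, le_rfl⟩ ^ ℓ ∨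
    (∃ s, 1 ≤ s ∧ s ≤ ℓ - 1 ∧
      f = MvPolynomial.X ⟨k, le_rfl⟩ ^ (ℓ - s) *
          MvPolynomial.X ⟨k+1, Nat.le_succ k⟩ ^ (r - ℓ + s)) ∨
    (∃ a : ℕ, ∃ ha : k + 1 ≤ a, ∃ t, t ≤ r - 1 ∧
      f = MvPolynomial.X ⟨a, Nat.le_of_succ_le ha⟩ ^ (r - t) *
          MvPolynomial.X ⟨a+1, by omega⟩ ^ t)}

/-- The homogeneous ideal `P_k^ℓ` of `S_k`. -/
noncomputable def PIdeal (r ℓ k : ℕ) : Ideal (MvPolynomial {m : ℕ // k ≤ m} ℚ) :=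
  Ideal.span (Pgens r k ℓ)

/-- `dim_ℚ (S_k/P_k^ℓ)_n`: the dimension of the image in `S_k/P_k^ℓ` of the weight-`n`
homogeneous component of `S_k`, where the variable `x_m` has weight `m`. -/
noncomputable def gradedDim (r ℓ k n : ℕ) : ℕ :=
  Module.finrank ℚ (Submodule.map (Ideal.Quotient.mkₐ ℚ (PIdeal r ℓ k)).toLinearMap
    (MvPolynomial.weightedHomogeneousSubmodule ℚ (fun m : {m : ℕ // k ≤ m} => (m : ℕ)) n))

/-- The Hilbert–Poincaré series `HP_ℓ^k(q) = Σ_{n ≥ 0} dim_ℚ (S_k/P_k^ℓ)_n qⁿ`. -/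
noncomputable def HPser (r ℓ k : ℕ) : PowerSeries ℚ :=
  PowerSeries.mk fun n => (gradedDim r ℓ k n : ℚ)

namespace GordonAux

abbrev σk (k : ℕ) : Type := {m : ℕ // k ≤ m}

/-- exponent vectors of the monomial generators -/
def Sexp (r k ℓ : ℕ) : Set (σk k →₀ ℕ) :=
  {d | d = Finsupp.single ⟨k, le_rfl⟩ ℓ ∨
    (∃ s, 1 ≤ s ∧ s ≤ ℓ - 1 ∧
      d = Finsupp.single ⟨k, le_rfl⟩ (ℓ - s) +
          Finsupp.single ⟨k+1, Nat.le_succ k⟩ (r - ℓ + s)) ∨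
    (∃ a : ℕ, ∃ ha : k + 1 ≤ a, ∃ t, t ≤ r - 1 ∧
      d = Finsupp.single ⟨a, Nat.le_of_succ_le ha⟩ (r - t) +
          Finsupp.single ⟨a+1, by omega⟩ t)}

lemma Pgens_eq (r k ℓ : ℕ) :
    Pgens r k ℓ = (fun s => MvPolynomial.monomial s (1 : ℚ)) '' Sexp r k ℓ := by
  have hX : ∀ (v : σk k) (e : ℕ),
      (MvPolynomial.X v ^ e : MvPolynomial (σk k) ℚ) =
        MvPolynomial.monomial (Finsupp.single v e) 1 := fun v e =>
    MvPolynomial.X_pow_eq_monomial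
  have hXX : ∀ (v u : σk k) (e f : ℕ),
      (MvPolynomial.X v ^ e * MvPolynomial.X u ^ f : MvPolynomial (σk k) ℚ) =
        MvPolynomial.monomial (Finsupp.single v e + Finsupp.single u f) 1 := by
    intro v u e f
    rw [hX, hX, MvPolynomial.monomial_mul, one_mul]
  ext g
  simp only [Pgens, Sexp, Set.mem_setOf_eq, Set.mem_image]
  constructor
  · rintro (h | ⟨s, hs1, hs2, h⟩ | ⟨a, ha, t, ht, h⟩)
    · exact ⟨_, Or.inl rfl, (h.trans (hX _ _)).symm⟩
    · exact ⟨_, Or.inr (Or.inl ⟨s, hs1, hs2, rfl⟩), (h.trans (hXX _ _ _ _)).symm⟩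
    · exact ⟨_, Or.inr (Or.inr ⟨a, ha, t, ht, rfl⟩), (h.trans (hXX _ _ _ _)).symm⟩
  · rintro ⟨s, (h | ⟨s', hs1, hs2, h⟩ | ⟨a, ha, t, ht, h⟩), rfl⟩
    · subst h; exact Or.inl (hX _ _).symm
    · subst h; exact Or.inr (Or.inl ⟨s', hs1, hs2, (hXX _ _ _ _).symm⟩)
    · subst h; exact Or.inr (Or.inr ⟨a, ha, t, ht, (hXX _ _ _ _).symm⟩)

lemma mem_PIdeal_iff {r ℓ k : ℕ} {f : MvPolynomial (σk k) ℚ} :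
    f ∈ PIdeal r ℓ k ↔ ∀ d ∈ f.support, ∃ s ∈ Sexp r k ℓ, s ≤ d := by
  rw [PIdeal, Pgens_eq]
  exact MvPolynomial.mem_ideal_span_monomial_image

/-- a monomial exponent is "good" if no generator divides it -/
def Good (r ℓ k : ℕ) (d : σk k →₀ ℕ) : Prop := ∀ s ∈ Sexp r k ℓ, ¬ s ≤ d

def GoodCond (r ℓ k : ℕ) (d : σk k →₀ ℕ) : Prop :=
  d ⟨k, le_rfl⟩ + 1 ≤ ℓ ∧
    ∀ a : ℕ, ∀ h : k ≤ a, d ⟨a, h⟩ + d ⟨a+1, Nat.le_succ_of_le h⟩ ≤ r - 1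

lemma pair_le_iff {α : Type*} [DecidableEq α] {v u : α} (hvu : v ≠ u) (e f : ℕ)
    (d : α →₀ ℕ) :
    Finsupp.single v e + Finsupp.single u f ≤ d ↔ e ≤ d v ∧ f ≤ d u := by
  constructor
  · intro h
    have hv := Finsupp.le_def.mp h v
    have hu := Finsupp.le_def.mp h u
    rw [Finsupp.add_apply, Finsupp.single_apply, Finsupp.single_apply,
      if_pos rfl, if_neg (Ne.symm hvu)] at hv
    rw [Finsupp.add_apply, Finsupp.single_apply, Finsupp.single_apply,
      if_neg hvu, if_pos rfl] at hu
    omega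
  · rintro ⟨h1, h2⟩
    rw [Finsupp.le_def]
    intro x
    rw [Finsupp.add_apply, Finsupp.single_apply, Finsupp.single_apply]
    by_cases hvx : v = x
    · subst hvx
      rw [if_pos rfl, if_neg (Ne.symm hvu)]
      omega
    · rw [if_neg hvx]
      by_cases hux : u = x
      · subst hux
        rw [if_pos rfl]
        omega
      · rw [if_neg hux]
        omega

lemma subne {k a b : ℕ} (h : a ≠ b) (ha : k ≤ a) (hb : k ≤ b) :
    (⟨a, ha⟩ : σk k) ≠ ⟨b, hb⟩ := by
  simp only [ne_eq, Subtype.mk.injEq]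
  exact h

lemma good_iff {r ℓ k : ℕ} (hr : 2 ≤ r) (hl1 : 1 ≤ ℓ) (hlr : ℓ ≤ r) (d : σk k →₀ ℕ) :
    Good r ℓ k d ↔ GoodCond r ℓ k d := by
  constructor
  · intro hg
    have h1 : d ⟨k, le_rfl⟩ + 1 ≤ ℓ := by
      by_contra hc
      exact hg _ (Or.inl rfl) (Finsupp.single_le_iff.mpr (by omega))
    refine ⟨h1, ?_⟩
    intro a ha
    by_contra hc
    have hsum : r ≤ d ⟨a, ha⟩ + d ⟨a+1, Nat.le_succ_of_le ha⟩ := by omega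
    by_cases hz : d ⟨a, ha⟩ = 0
    -- then d at a+1 is at least r; use generator x_{a+1}^r
    · have hr2 : r ≤ d ⟨a+1, Nat.le_succ_of_le ha⟩ := by omega
      refine hg (Finsupp.single ⟨a+1, Nat.le_succ_of_le ha⟩ (r - 0) +
          Finsupp.single ⟨a+2, by omega⟩ 0)
        (Or.inr (Or.inr ⟨a+1, by omega, 0, by omega, rfl⟩)) ?_
      rw [pair_le_iff (subne (by omega) _ _)]
      exact ⟨by omega, by omega⟩
    · rcases eq_or_lt_of_le ha with rfl | hka
      -- a = k : use the s-family generator with s = ℓ - d_k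
      · refine hg (Finsupp.single ⟨k, le_rfl⟩ (ℓ - (ℓ - d ⟨k, le_rfl⟩)) +
            Finsupp.single ⟨k+1, Nat.le_succ k⟩ (r - ℓ + (ℓ - d ⟨k, le_rfl⟩)))
          (Or.inr (Or.inl ⟨ℓ - d ⟨k, le_rfl⟩, by omega, by omega, rfl⟩)) ?_
        rw [pair_le_iff (subne (by omega) _ _)]
        constructor
        · omega
        · omega
      -- a > k : use the third family
      · by_cases hbig : r ≤ d ⟨a, ha⟩
        · refine hg (Finsupp.single ⟨a, ha⟩ (r - 0) + Finsupp.single ⟨a+1, by omega⟩ 0)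
            (Or.inr (Or.inr ⟨a, by omega, 0, by omega, rfl⟩)) ?_
          rw [pair_le_iff (subne (by omega) _ _)]
          exact ⟨by omega, by omega⟩
        · refine hg (Finsupp.single ⟨a, ha⟩ (r - (r - d ⟨a, ha⟩)) +
              Finsupp.single ⟨a+1, by omega⟩ (r - d ⟨a, ha⟩))
            (Or.inr (Or.inr ⟨a, by omega, r - d ⟨a, ha⟩, by omega, rfl⟩)) ?_
          rw [pair_le_iff (subne (by omega) _ _)]
          exact ⟨by omega, by omega⟩
  · rintro ⟨h1, h2⟩ s hs hle
    rcases hs with h | ⟨s', hs1, hs2, h⟩ | ⟨a, ha, t, ht, h⟩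
    · subst h
      rw [Finsupp.single_le_iff] at hle
      omega
    · subst h
      rw [pair_le_iff (subne (by omega) _ _)] at hle
      have := h2 k le_rfl
      omega
    · subst h
      rw [pair_le_iff (subne (by omega) _ _)] at hle
      have := h2 a (by omega)
      omega

lemma weight_eq_sum {k : ℕ} (d : σk k →₀ ℕ) :
    (Finsupp.weight (fun m : σk k => (m : ℕ))) d =
      ((Finsupp.toMultiset d).map (fun m : σk k => (m : ℕ))).sum := by
  induction d using Finsupp.induction with
  | zero => simp
  | single_add a b f haf hb ih =>
    rw [map_add, Finsupp.toMultiset_add, Multiset.map_add, Multiset.sum_add, ih]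
    congr 1
    rw [Finsupp.toMultiset_single]
    rw [Finsupp.weight_apply, Finsupp.sum_single_index (by simp)]
    rw [Multiset.nsmul_singleton, Multiset.map_replicate, Multiset.sum_replicate]

lemma count_map_toMultiset {k : ℕ} (d : σk k →₀ ℕ) (a : ℕ) (h : k ≤ a) :
    Multiset.count a ((Finsupp.toMultiset d).map (fun m : σk k => (m : ℕ))) = d ⟨a, h⟩ := by
  have := Multiset.count_map_eq_count' (fun m : σk k => (m : ℕ)) (Finsupp.toMultiset d)
    Subtype.val_injective ⟨a, h⟩
  rw [this, Finsupp.count_toMultiset]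

lemma count_map_toMultiset_zero {k : ℕ} (d : σk k →₀ ℕ) (a : ℕ) (h : a < k) :
    Multiset.count a ((Finsupp.toMultiset d).map (fun m : σk k => (m : ℕ))) = 0 := by
  rw [Multiset.count_eq_zero]
  intro hmem
  rcases Multiset.mem_map.mp hmem with ⟨m, _, rfl⟩
  exact absurd m.2 (by omega)

variable {r ℓ J n : ℕ}

/-- the map from good exponent vectors to partitions -/
noncomputable def toPart (r ℓ : ℕ) (hr : 2 ≤ r) (hl1 : 1 ≤ ℓ) (hlr : ℓ ≤ r)
    (x : {d : σk (J+1) →₀ ℕ //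
      (Finsupp.weight (fun m : σk (J+1) => (m : ℕ))) d = n ∧ Good r ℓ (J+1) d}) :
    {p : Nat.Partition n // GordonCond r p ∧ (∀ y ∈ p.parts, J < y) ∧
      Multiset.count (J+1) p.parts ≤ ℓ - 1} := by
  refine ⟨⟨(Finsupp.toMultiset x.1).map (fun m : σk (J+1) => (m : ℕ)), ?_, ?_⟩, ?_, ?_, ?_⟩
  · intro i hi
    rcases Multiset.mem_map.mp hi with ⟨m, _, rfl⟩
    have := m.2
    omega
  · rw [← weight_eq_sum]
    exact x.2.1
  · -- Gordon condition
    have hg := (good_iff hr hl1 hlr x.1).mp x.2.2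
    intro a ha1
    by_cases hk : J + 1 ≤ a
    · rw [count_map_toMultiset x.1 a hk,
        count_map_toMultiset x.1 (a+1) (Nat.le_succ_of_le hk)]
      exact hg.2 a hk
    · rw [count_map_toMultiset_zero x.1 a (by omega)]
      rcases Nat.lt_or_ge (a+1) (J+1) with h2 | h2
      · rw [count_map_toMultiset_zero x.1 (a+1) h2]
        omega
      · have ha : a = J := by omega
        subst ha
        rw [count_map_toMultiset x.1 (a+1) le_rfl]
        have := hg.1
        omega
  · intro y hy
    rcases Multiset.mem_map.mp hy with ⟨m, _, rfl⟩
    have := m.2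
    omega
  · have hg := (good_iff hr hl1 hlr x.1).mp x.2.2
    rw [count_map_toMultiset x.1 (J+1) le_rfl]
    have := hg.1
    omega

lemma toPart_bijective (hr : 2 ≤ r) (hl1 : 1 ≤ ℓ) (hlr : ℓ ≤ r) :
    Function.Bijective (toPart (J := J) (n := n) r ℓ hr hl1 hlr) := by
  constructor
  · rintro ⟨d1, h1⟩ ⟨d2, h2⟩ heq
    have hparts : (Finsupp.toMultiset d1).map (fun m : σk (J+1) => (m : ℕ)) =
        (Finsupp.toMultiset d2).map (fun m : σk (J+1) => (m : ℕ)) :=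
      congrArg (fun z => z.1.parts) heq
    refine Subtype.ext (Finsupp.ext fun m => ?_)
    have e1 := count_map_toMultiset d1 m.1 m.2
    have e2 := count_map_toMultiset d2 m.1 m.2
    rw [Subtype.eta] at e1 e2
    rw [← e1, ← e2, hparts]
  · rintro ⟨p, hG, hJlt, hcnt⟩
    set dm : Multiset (σk (J+1)) :=
      p.parts.attach.map (fun x => ⟨x.1, hJlt x.1 x.2⟩) with hdm
    set d : σk (J+1) →₀ ℕ := dm.toFinsupp with hd
    have htm : Finsupp.toMultiset d = dm := Multiset.toFinsupp_toMultiset dm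
    have hmap : (Finsupp.toMultiset d).map (fun m : σk (J+1) => (m : ℕ)) = p.parts := by
      rw [htm, hdm, Multiset.map_map]
      exact Multiset.attach_map_val p.parts
    have hcount : ∀ (a : ℕ) (h : J + 1 ≤ a), d ⟨a, h⟩ = Multiset.count a p.parts := by
      intro a h
      rw [← count_map_toMultiset d a h, hmap]
    have hw : (Finsupp.weight (fun m : σk (J+1) => (m : ℕ))) d = n := by
      rw [weight_eq_sum, hmap]
      exact p.parts_sum
    have hgc : GoodCond r ℓ (J+1) d := by
      constructor
      · rw [hcount (J+1) le_rfl]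
        omega
      · intro a ha
        rw [hcount a ha, hcount (a+1) (Nat.le_succ_of_le ha)]
        exact hG a (by omega)
    refine ⟨⟨d, hw, (good_iff hr hl1 hlr d).mpr hgc⟩, ?_⟩
    apply Subtype.ext
    apply Nat.Partition.ext
    exact hmap

lemma gradedDim_eq (r ℓ k n : ℕ)
    [Finite {d : σk k →₀ ℕ //
      (Finsupp.weight (fun m : σk k => (m : ℕ))) d = n ∧ Good r ℓ k d}] :
    gradedDim r ℓ k n =
      Nat.card {d : σk k →₀ ℕ //
        (Finsupp.weight (fun m : σk k => (m : ℕ))) d = n ∧ Good r ℓ k d} := by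
  classical
  set w : σk k → ℕ := fun m => (m : ℕ) with hw
  set E' : Set (σk k →₀ ℕ) := {d | (Finsupp.weight w) d = n ∧ Good r ℓ k d} with hE'
  set mkL := (Ideal.Quotient.mkₐ ℚ (PIdeal r ℓ k)).toLinearMap with hmkL
  have hzero : ∀ dd : σk k →₀ ℕ, ¬ Good r ℓ k dd →
      mkL (MvPolynomial.monomial dd (1 : ℚ)) = 0 := by
    intro dd hgood
    have hmem : (MvPolynomial.monomial dd (1 : ℚ)) ∈ PIdeal r ℓ k := by
      rw [mem_PIdeal_iff]
      intro x hx
      rw [MvPolynomial.support_monomial, if_neg one_ne_zero, Finset.mem_singleton] at hx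
      subst hx
      unfold Good at hgood
      push_neg at hgood
      exact hgood
    show Ideal.Quotient.mkₐ ℚ (PIdeal r ℓ k) _ = 0
    rw [Ideal.Quotient.mkₐ_eq_mk]
    exact Ideal.Quotient.eq_zero_iff_mem.mpr hmem
  have key : Submodule.map mkL
      (MvPolynomial.weightedHomogeneousSubmodule ℚ w n) =
      Submodule.span ℚ (Set.range fun e : E' => mkL (MvPolynomial.monomial e.1 (1 : ℚ))) := by
    rw [MvPolynomial.weightedHomogeneousSubmodule_eq_finsupp_supported,
      AddMonoidAlgebra.supported_eq_span_single, Submodule.map_span]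
    apply le_antisymm
    · rw [Submodule.span_le]
      rintro y ⟨z, ⟨dd, hdd, rfl⟩, rfl⟩
      by_cases hgood : Good r ℓ k dd
      · apply Submodule.subset_span
        exact ⟨⟨dd, hdd, hgood⟩, by simp [MvPolynomial.single_eq_monomial]⟩
      · simp only [MvPolynomial.single_eq_monomial]
        rw [hzero dd hgood]
        exact Submodule.zero_mem _
    · rw [Submodule.span_le]
      rintro y ⟨e, rfl⟩
      apply Submodule.subset_span
      exact ⟨_, ⟨e.1, e.2.1, rfl⟩, by simp [MvPolynomial.single_eq_monomial]⟩
  have hsets : (Set.range fun e : E' => MvPolynomial.monomial e.1 (1 : ℚ)) =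
      (fun i => AddMonoidAlgebra.single i (1 : ℚ)) '' E' := by
    ext z
    constructor
    · rintro ⟨e, rfl⟩
      exact ⟨e.1, e.2, MvPolynomial.single_eq_monomial _ _⟩
    · rintro ⟨dd, hdd, rfl⟩
      exact ⟨⟨dd, hdd⟩, (MvPolynomial.single_eq_monomial _ _).symm⟩
  have hLI : LinearIndependent ℚ
      (fun e : E' => mkL (MvPolynomial.monomial e.1 (1 : ℚ))) := by
    have h0 : LinearIndependent ℚ
        (fun e : E' => MvPolynomial.monomial (R := ℚ) e.1 (1 : ℚ)) := by
      have hb := (MvPolynomial.basisMonomials (σk k) ℚ).linearIndependent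
      have := hb.comp (fun e : E' => e.1) Subtype.val_injective
      rwa [MvPolynomial.coe_basisMonomials] at this
    have hdisj : Disjoint
        (Submodule.span ℚ (Set.range fun e : E' => MvPolynomial.monomial e.1 (1 : ℚ)))
        (LinearMap.ker mkL) := by
      rw [Submodule.disjoint_def]
      intro x hx hker
      rw [hsets, ← AddMonoidAlgebra.supported_eq_span_single] at hx
      have hsup : ↑x.support ⊆ E' := AddMonoidAlgebra.mem_supported.mp hx
      have hker' : x ∈ PIdeal r ℓ k := by
        rw [← Ideal.Quotient.eq_zero_iff_mem]
        rw [← Ideal.Quotient.mkₐ_eq_mk ℚ]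
        exact hker
      by_contra hx0
      obtain ⟨d0, hd0⟩ := Finset.nonempty_iff_ne_empty.mpr
        (fun hh => hx0 (MvPolynomial.support_eq_empty.mp hh))
      obtain ⟨s, hs, hsle⟩ := mem_PIdeal_iff.mp hker' d0 hd0
      exact (hsup hd0).2 s hs hsle
    exact h0.map hdisj
  haveI : Finite ↑E' := inferInstanceAs
    (Finite {d : σk k →₀ ℕ // (Finsupp.weight w) d = n ∧ Good r ℓ k d})
  haveI : Fintype ↑E' := Fintype.ofFinite ↑E'
  rw [gradedDim, key, finrank_span_eq_card hLI, ← Nat.card_eq_fintype_card]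
  rfl

end GordonAux

/-- For `r ≥ 2`, `1 ≤ i ≤ r`, `J ≥ 0`: the dimension of the weight-`n` component of
`S_{J+1}/P_{r,i,J}` equals `B_{r,i,J}(n)` for every `n`; equivalently
`HP_i^{J+1}(q) = ℬ_{r,i,J}(q)` in `ℚ[[q]]`. -/
theorem hilbert_series_eq_Bseries (r i J : ℕ) (hr : 2 ≤ r) (hi1 : 1 ≤ i) (hir : i ≤ r) :
    (∀ n : ℕ, gradedDim r i (J+1) n = BCount r i J n) ∧
      HPser r i (J+1) = Bseries r i J := by
  have hmain : ∀ n : ℕ, gradedDim r i (J+1) n = BCount r i J n := by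
    intro n
    have hbij := GordonAux.toPart_bijective (r := r) (ℓ := i) (J := J) (n := n) hr hi1 hir
    have e := Equiv.ofBijective _ hbij
    haveI : Finite {p : Nat.Partition n // GordonCond r p ∧ (∀ x ∈ p.parts, J < x) ∧
        Multiset.count (J+1) p.parts ≤ i - 1} := Subtype.finite
    haveI : Finite {d : GordonAux.σk (J+1) →₀ ℕ //
        (Finsupp.weight (fun m : GordonAux.σk (J+1) => (m : ℕ))) d = n ∧
        GordonAux.Good r i (J+1) d} := Finite.of_equiv _ e.symm
    rw [GordonAux.gradedDim_eq, BCount]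
    exact Nat.card_congr e
  refine ⟨hmain, ?_⟩
  ext n
  simp [HPser, Bseries, coeff_mk, hmain n]
end

section
/- For all integers r ≥ 2, k ≥ 1, and 1 ≤ ℓ ≤ r, the Hilbert–Poincaré series satisfy the recursion HP_ℓ^k(q) = Σ_{j=1}^{ℓ} q^{k(j−1)} · HP_{r−j+1}^{k+1}(q) in ℚ[[q]]. -/
open PowerSeries Finset

namespace HPrec

open MvPolynomial

/-- Exponent vectors of the generators. -/
def DSet (r ℓ k : ℕ) : Set ({m : ℕ // k ≤ m} →₀ ℕ) :=
  {d | d = Finsupp.single ⟨k, le_rfl⟩ ℓ ∨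
    (∃ s, 1 ≤ s ∧ s ≤ ℓ - 1 ∧
      d = Finsupp.single ⟨k, le_rfl⟩ (ℓ - s) +
          Finsupp.single ⟨k+1, Nat.le_succ k⟩ (r - ℓ + s)) ∨
    (∃ a : ℕ, ∃ ha : k + 1 ≤ a, ∃ t, t ≤ r - 1 ∧
      d = Finsupp.single ⟨a, Nat.le_of_succ_le ha⟩ (r - t) +
          Finsupp.single ⟨a+1, by omega⟩ t)}

/-- Standard (non-divisible) exponent vectors of weight `n`. -/
def StdSet (r ℓ k n : ℕ) : Set ({m : ℕ // k ≤ m} →₀ ℕ) :=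
  {f | Finsupp.weight (fun m : {m : ℕ // k ≤ m} => (m : ℕ)) f = n ∧
    ∀ g ∈ DSet r ℓ k, ¬ g ≤ f}

theorem Pgens_eq (r k ℓ : ℕ) :
    Pgens r k ℓ = (fun d => MvPolynomial.monomial d (1:ℚ)) '' DSet r ℓ k := by
  ext f
  simp only [Pgens, Set.mem_image, Set.mem_setOf_eq, DSet]
  constructor
  · rintro (h | ⟨s, h1, h2, h⟩ | ⟨a, ha, t, ht, h⟩)
    · exact ⟨_, Or.inl rfl, by rw [h, X_pow_eq_monomial]⟩
    · exact ⟨_, Or.inr (Or.inl ⟨s, h1, h2, rfl⟩), by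
        rw [h, X_pow_eq_monomial, X_pow_eq_monomial, monomial_mul, one_mul]⟩
    · exact ⟨_, Or.inr (Or.inr ⟨a, ha, t, ht, rfl⟩), by
        rw [h, X_pow_eq_monomial, X_pow_eq_monomial, monomial_mul, one_mul]⟩
  · rintro ⟨d, (h | ⟨s, h1, h2, h⟩ | ⟨a, ha, t, ht, h⟩), rfl⟩
    · exact Or.inl (by rw [h, X_pow_eq_monomial])
    · exact Or.inr (Or.inl ⟨s, h1, h2, by
        rw [h, X_pow_eq_monomial, X_pow_eq_monomial, monomial_mul, one_mul]⟩)
    · exact Or.inr (Or.inr ⟨a, ha, t, ht, by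
        rw [h, X_pow_eq_monomial, X_pow_eq_monomial, monomial_mul, one_mul]⟩)

theorem mem_PIdeal_iff {r ℓ k : ℕ} {p : MvPolynomial {m : ℕ // k ≤ m} ℚ} :
    p ∈ PIdeal r ℓ k ↔ ∀ m ∈ p.support, ∃ d ∈ DSet r ℓ k, d ≤ m := by
  rw [PIdeal, Pgens_eq, mem_ideal_span_monomial_image]

theorem stdSet_finite (r ℓ k n : ℕ) (hk : 1 ≤ k) : (StdSet r ℓ k n).Finite := by
  have hsub : StdSet r ℓ k n ⊆
      Set.Iic (Finsupp.indicator ((Finset.Icc k n).subtype (k ≤ ·)) (fun _ _ => n)) := by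
    intro f hf i
    by_cases h0 : f i = 0
    · simp [h0]
    · have hw : (i : ℕ) ≤ Finsupp.weight (fun m : {m : ℕ // k ≤ m} => (m : ℕ)) f :=
        Finsupp.le_weight_of_ne_zero' _ h0
      have hine : ((fun m : {m : ℕ // k ≤ m} => (m : ℕ)) i) ≠ 0 := by
        have := i.2; simp only []; omega
      have hfi : f i ≤ n := by
        have h2 := Finsupp.le_weight (fun m : {m : ℕ // k ≤ m} => (m : ℕ)) hine f
        rw [hf.1] at h2; exact h2
      rw [hf.1] at hw
      have hi : i ∈ (Finset.Icc k n).subtype (k ≤ ·) := by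
        simp [Finset.mem_subtype, Finset.mem_Icc, i.2, hw]
      rw [Finsupp.indicator_of_mem hi]
      exact hfi
  exact (Set.finite_Iic _).subset hsub

theorem mk_ne {k a b : ℕ} (h : a ≠ b) {ha : k ≤ a} {hb : k ≤ b} :
    (⟨a, ha⟩ : {m : ℕ // k ≤ m}) ≠ ⟨b, hb⟩ :=
  fun hh => h (congrArg Subtype.val hh)

theorem pair_le {α : Type*} {i j : α} (hij : i ≠ j) (p q : ℕ) (f : α →₀ ℕ) :
    Finsupp.single i p + Finsupp.single j q ≤ f ↔ p ≤ f i ∧ q ≤ f j := by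
  classical
  rw [Finsupp.le_def]
  constructor
  · intro h
    constructor
    · have := h i; simpa [Finsupp.single_apply, hij.symm] using this
    · have := h j; simpa [Finsupp.single_apply, hij] using this
  · rintro ⟨h1, h2⟩ x
    rcases eq_or_ne x i with rfl | hxi
    · simpa [Finsupp.single_apply, hij.symm] using h1
    rcases eq_or_ne x j with rfl | hxj
    · simpa [Finsupp.single_apply, hij] using h2
    · simp [Finsupp.single_apply, Ne.symm hxi, Ne.symm hxj]

theorem good_iff (r ℓ k : ℕ) (f : {m : ℕ // k ≤ m} →₀ ℕ) :
    (∀ g ∈ DSet r ℓ k, ¬ g ≤ f) ↔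
      (f ⟨k, le_rfl⟩ < ℓ ∧
       (∀ s, 1 ≤ s → s ≤ ℓ - 1 →
          f ⟨k, le_rfl⟩ < ℓ - s ∨ f ⟨k+1, Nat.le_succ k⟩ < r - ℓ + s) ∧
       (∀ a : ℕ, ∀ ha : k + 1 ≤ a, ∀ t, t ≤ r - 1 →
          f ⟨a, Nat.le_of_succ_le ha⟩ < r - t ∨ f ⟨a+1, by omega⟩ < t)) := by
  constructor
  · intro h
    refine ⟨?_, ?_, ?_⟩
    · have := h _ (Or.inl rfl)
      rw [Finsupp.single_le_iff] at this; omega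
    · intro s hs1 hs2
      have := h _ (Or.inr (Or.inl ⟨s, hs1, hs2, rfl⟩))
      rw [pair_le (mk_ne (by omega))] at this; omega
    · intro a ha t ht
      have := h _ (Or.inr (Or.inr ⟨a, ha, t, ht, rfl⟩))
      rw [pair_le (mk_ne (by omega))] at this; omega
  · rintro ⟨h1, h2, h3⟩ g hg hle
    rcases hg with rfl | ⟨s, hs1, hs2, rfl⟩ | ⟨a, ha, t, ht, rfl⟩
    · rw [Finsupp.single_le_iff] at hle; omega
    · rw [pair_le (mk_ne (by omega))] at hle
      rcases h2 s hs1 hs2 with h | h <;> omega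
    · rw [pair_le (mk_ne (by omega))] at hle
      rcases h3 a ha t ht with h | h <;> omega




variable {r ℓ k n : ℕ}

/-- Embedding of index sets. -/
def emb (k : ℕ) : {m : ℕ // k + 1 ≤ m} ↪ {m : ℕ // k ≤ m} :=
  ⟨fun i => ⟨i.1, Nat.le_of_succ_le i.2⟩,
   by intro a b h; cases a; cases b; simpa using h⟩

/-- Restriction of an exponent vector to the variables `x_m`, `m ≥ k+1`. -/
noncomputable def down (f : {m : ℕ // k ≤ m} →₀ ℕ) : {m : ℕ // k + 1 ≤ m} →₀ ℕ :=
  Finsupp.comapDomain (emb k) f ((emb k).injective.injOn)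

theorem down_apply (f : {m : ℕ // k ≤ m} →₀ ℕ) (i : {m : ℕ // k + 1 ≤ m}) :
    down f i = f ⟨i.1, Nat.le_of_succ_le i.2⟩ :=
  Finsupp.comapDomain_apply _ _ _ _

/-- Extension of an exponent vector by value `e` on `x_k`. -/
noncomputable def up (k e : ℕ) (g : {m : ℕ // k + 1 ≤ m} →₀ ℕ) : {m : ℕ // k ≤ m} →₀ ℕ :=
  Finsupp.single ⟨k, le_rfl⟩ e + Finsupp.embDomain (emb k) g

theorem up_apply_k (e : ℕ) (g : {m : ℕ // k + 1 ≤ m} →₀ ℕ) :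
    up k e g ⟨k, le_rfl⟩ = e := by
  have hnr : (⟨k, le_rfl⟩ : {m : ℕ // k ≤ m}) ∉ Set.range (emb k) := by
    rintro ⟨i, hi⟩
    have := congrArg Subtype.val hi
    have := i.2
    simp only [emb, Function.Embedding.coeFn_mk] at *
    have h3 : (i : ℕ) = k := congrArg Subtype.val hi; have h4 := i.2; omega
  rw [up, Finsupp.add_apply, Finsupp.single_apply, if_pos rfl,
    Finsupp.embDomain_notin_range _ _ _ hnr, add_zero]

theorem up_apply_emb (e : ℕ) (g : {m : ℕ // k + 1 ≤ m} →₀ ℕ) (i : {m : ℕ // k + 1 ≤ m}) :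
    up k e g (emb k i) = g i := by
  have hne : (⟨k, le_rfl⟩ : {m : ℕ // k ≤ m}) ≠ emb k i := by
    have := i.2
    exact mk_ne (by omega)
  rw [up, Finsupp.add_apply, Finsupp.single_apply, if_neg hne,
    Finsupp.embDomain_apply_self, zero_add]

theorem down_up (e : ℕ) (g : {m : ℕ // k + 1 ≤ m} →₀ ℕ) : down (up k e g) = g := by
  ext i
  rw [down_apply]
  have : (⟨i.1, Nat.le_of_succ_le i.2⟩ : {m : ℕ // k ≤ m}) = emb k i := rfl
  rw [this, up_apply_emb]

theorem up_down (f : {m : ℕ // k ≤ m} →₀ ℕ) : up k (f ⟨k, le_rfl⟩) (down f) = f := by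
  ext i
  obtain ⟨m, hm⟩ := i
  rcases eq_or_lt_of_le hm with h | h
  · subst h
    exact up_apply_k _ _
  · have hm1 : k + 1 ≤ m := h
    have heq : (⟨m, hm⟩ : {m : ℕ // k ≤ m}) = emb k ⟨m, hm1⟩ := rfl
    rw [heq, up_apply_emb, down_apply]
    rfl


theorem weight_single (k : ℕ) (i : {m : ℕ // k ≤ m}) (e : ℕ) :
    Finsupp.weight (fun m : {m : ℕ // k ≤ m} => (m : ℕ)) (Finsupp.single i e) = e * i := by
  rw [Finsupp.weight_apply, Finsupp.sum_single_index] <;> simp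

theorem weight_embDomain (g : {m : ℕ // k + 1 ≤ m} →₀ ℕ) :
    Finsupp.weight (fun m : {m : ℕ // k ≤ m} => (m : ℕ)) (Finsupp.embDomain (emb k) g) =
      Finsupp.weight (fun m : {m : ℕ // k + 1 ≤ m} => (m : ℕ)) g := by
  rw [Finsupp.weight_apply, Finsupp.weight_apply, Finsupp.sum_embDomain]
  rfl

theorem weight_up (e : ℕ) (g : {m : ℕ // k + 1 ≤ m} →₀ ℕ) :
    Finsupp.weight (fun m : {m : ℕ // k ≤ m} => (m : ℕ)) (up k e g) =
      k * e + Finsupp.weight (fun m : {m : ℕ // k + 1 ≤ m} => (m : ℕ)) g := by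
  rw [up, map_add, weight_single, weight_embDomain, Nat.mul_comm]

theorem weight_eq_down (f : {m : ℕ // k ≤ m} →₀ ℕ) :
    Finsupp.weight (fun m : {m : ℕ // k ≤ m} => (m : ℕ)) f =
      k * f ⟨k, le_rfl⟩ +
        Finsupp.weight (fun m : {m : ℕ // k + 1 ≤ m} => (m : ℕ)) (down f) := by
  conv_lhs => rw [← up_down f]
  rw [weight_up]



theorem good_down {r ℓ k : ℕ} (hr : 2 ≤ r) (hlr : ℓ ≤ r) (f : {m : ℕ // k ≤ m} →₀ ℕ) :
    (∀ g ∈ DSet r ℓ k, ¬ g ≤ f) ↔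
      (f ⟨k, le_rfl⟩ < ℓ ∧
        ∀ g ∈ DSet r (r - f ⟨k, le_rfl⟩) (k+1), ¬ g ≤ down f) := by
  rw [good_iff, good_iff]
  let v : ℕ → ℕ := fun m => if h : k ≤ m then f ⟨m, h⟩ else 0
  have hfv : ∀ (m : ℕ) (h : k ≤ m), f ⟨m, h⟩ = v m := by
    intro m h
    show f ⟨m, h⟩ = if h' : k ≤ m then f ⟨m, h'⟩ else 0
    rw [dif_pos h]
  have hd : ∀ (m : ℕ) (hm : k + 1 ≤ m), down f ⟨m, hm⟩ = v m := by
    intro m hm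
    rw [down_apply]
    exact hfv m (Nat.le_of_succ_le hm)
  simp only [hd, hfv]
  constructor
  · rintro ⟨h1, h2, h3⟩
    refine ⟨h1, ?_, ?_, ?_⟩
    · -- v (k+1) < r - v k
      rcases Nat.eq_zero_or_pos (v k) with h0 | h0
      · have := h3 (k+1) le_rfl 0 (by omega)
        omega
      · have := h2 (ℓ - v k) (by omega) (by omega)
        omega
    · intro s hs1 hs2
      have := h3 (k+1) le_rfl (v k + s) (by omega)
      omega
    · intro a ha t ht
      exact h3 a (by omega) t ht
  · rintro ⟨h1, h1', h2', h3'⟩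
    refine ⟨h1, ?_, ?_⟩
    · intro s hs1 hs2
      omega
    · intro a ha t ht
      by_cases hak : a = k + 1
      · subst hak
        by_cases htv : t ≤ v k
        · left; omega
        · have := h2' (t - v k) (by omega) (by omega)
          omega
      · exact h3' a (by omega) t ht

theorem gradedDim_eq (r ℓ k n : ℕ) (hk : 1 ≤ k) :
    gradedDim r ℓ k n = (StdSet r ℓ k n).ncard := by
  classical
  have hfin := stdSet_finite r ℓ k n hk
  haveI : Fintype (StdSet r ℓ k n) := hfin.fintype
  set q := Ideal.Quotient.mkₐ ℚ (PIdeal r ℓ k) with hqdef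
  set b : StdSet r ℓ k n → MvPolynomial {m : ℕ // k ≤ m} ℚ ⧸ PIdeal r ℓ k :=
    fun d => q (monomial (d : {m : ℕ // k ≤ m} →₀ ℕ) 1) with hbdef
  have hq0 : ∀ (m : {m : ℕ // k ≤ m} →₀ ℕ) (c : ℚ), (∃ d ∈ DSet r ℓ k, d ≤ m) →
      q (monomial m c) = 0 := by
    intro m c hm
    rw [hqdef, Ideal.Quotient.mkₐ_eq_mk, Ideal.Quotient.eq_zero_iff_mem, mem_PIdeal_iff]
    intro m' hm'
    have h1 := support_monomial_subset hm'
    rw [Finset.mem_singleton] at h1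
    subst h1
    exact hm
  have hmono : ∀ (m : {m : ℕ // k ≤ m} →₀ ℕ) (c : ℚ),
      q (monomial m c) = c • q (monomial m 1) := by
    intro m c
    rw [← map_smul q, smul_monomial, smul_eq_mul, mul_one]
  have hli : LinearIndependent ℚ b := by
    rw [linearIndependent_iff']
    intro s g hsum i hi
    by_contra hgi
    have hqp : q (∑ j ∈ s, monomial (j : {m : ℕ // k ≤ m} →₀ ℕ) (g j)) = 0 := by
      rw [map_sum, ← hsum]
      refine Finset.sum_congr rfl fun j _ => ?_
      rw [hmono]
    rw [hqdef, Ideal.Quotient.mkₐ_eq_mk, Ideal.Quotient.eq_zero_iff_mem, mem_PIdeal_iff] at hqp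
    have hc : coeff (i : {m : ℕ // k ≤ m} →₀ ℕ)
        (∑ j ∈ s, monomial (j : {m : ℕ // k ≤ m} →₀ ℕ) (g j)) = g i := by
      rw [coeff_sum, Finset.sum_eq_single i]
      · rw [MvPolynomial.coeff_monomial, if_pos rfl]
      · intro j _ hji
        rw [MvPolynomial.coeff_monomial, if_neg (fun h => hji (Subtype.ext h))]
      · intro h; exact absurd hi h
    have hsupp : (i : {m : ℕ // k ≤ m} →₀ ℕ) ∈
        (∑ j ∈ s, monomial (j : {m : ℕ // k ≤ m} →₀ ℕ) (g j)).support := by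
      rw [mem_support_iff, hc]; exact hgi
    obtain ⟨d, hd, hdi⟩ := hqp _ hsupp
    exact i.2.2 d hd hdi
  have hsp : Submodule.map q.toLinearMap
      (weightedHomogeneousSubmodule ℚ (fun m : {m : ℕ // k ≤ m} => (m : ℕ)) n)
      = Submodule.span ℚ (Set.range b) := by
    apply le_antisymm
    · rintro x ⟨y, hy, rfl⟩
      have hy' : IsWeightedHomogeneous (fun m : {m : ℕ // k ≤ m} => (m : ℕ)) y n := hy
      have hrepr : q.toLinearMap y = ∑ m ∈ y.support, q (monomial m (coeff m y)) := by
        rw [AlgHom.toLinearMap_apply]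
        conv_lhs => rw [y.as_sum]
        rw [map_sum]
      rw [hrepr]
      apply Submodule.sum_mem
      intro m hm
      by_cases hstd : m ∈ StdSet r ℓ k n
      · rw [hmono]
        exact Submodule.smul_mem _ _ (Submodule.subset_span ⟨⟨m, hstd⟩, rfl⟩)
      · have hw : Finsupp.weight (fun m : {m : ℕ // k ≤ m} => (m : ℕ)) m = n :=
          hy' (mem_support_iff.mp hm)
        have hdiv : ∃ d ∈ DSet r ℓ k, d ≤ m := by
          by_contra hno
          push_neg at hno
          exact hstd ⟨hw, fun g hg => hno g hg⟩
        rw [hq0 m _ hdiv]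
        exact Submodule.zero_mem _
    · rw [Submodule.span_le]
      rintro x ⟨i, rfl⟩
      exact ⟨monomial (i : {m : ℕ // k ≤ m} →₀ ℕ) 1,
        (mem_weightedHomogeneousSubmodule _ _ _ _).mpr
          (isWeightedHomogeneous_monomial _ _ _ i.2.1), rfl⟩
  rw [gradedDim, hsp, finrank_span_eq_card hli, ← Nat.card_coe_set_eq,
    Nat.card_eq_fintype_card]

theorem down_image_fiber {r ℓ k n : ℕ} (hr : 2 ≤ r) (hlr : ℓ ≤ r) {j : ℕ}
    (hj1 : 1 ≤ j) (hjl : j ≤ ℓ) (hkn : k * (j-1) ≤ n) :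
    down '' {f | f ∈ StdSet r ℓ k n ∧ f ⟨k, le_rfl⟩ = j - 1}
      = StdSet r (r - j + 1) (k + 1) (n - k * (j-1)) := by
  have hrj : r - (j - 1) = r - j + 1 := by omega
  ext g
  constructor
  · rintro ⟨f, ⟨⟨hw, hgood⟩, hfk⟩, rfl⟩
    have hweq := weight_eq_down f
    rw [hw, hfk] at hweq
    have hgd := (good_down hr hlr f).mp hgood
    rw [hfk, hrj] at hgd
    exact ⟨by omega, hgd.2⟩
  · rintro ⟨hw, hgood⟩
    refine ⟨up k (j-1) g, ⟨⟨?_, ?_⟩, up_apply_k _ _⟩, down_up _ _⟩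
    · rw [weight_up, hw]; omega
    · apply (good_down hr hlr (up k (j-1) g)).mpr
      rw [up_apply_k, down_up, hrj]
      exact ⟨by omega, hgood⟩

theorem ncard_stdSet {r ℓ k : ℕ} (hr : 2 ≤ r) (hk : 1 ≤ k) (hl1 : 1 ≤ ℓ) (hlr : ℓ ≤ r)
    (n : ℕ) :
    (StdSet r ℓ k n).ncard =
      ∑ j ∈ Finset.Icc 1 ℓ,
        if k * (j-1) ≤ n then (StdSet r (r - j + 1) (k+1) (n - k * (j-1))).ncard else 0 := by
  classical
  have hfin := stdSet_finite r ℓ k n hk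
  have hmap : ∀ f ∈ hfin.toFinset, f ⟨k, le_rfl⟩ + 1 ∈ Finset.Icc 1 ℓ := by
    intro f hf
    rw [Set.Finite.mem_toFinset] at hf
    have h1 := hf.2 _ (Or.inl rfl)
    rw [Finsupp.single_le_iff] at h1
    rw [Finset.mem_Icc]
    omega
  have hcard := Finset.card_eq_sum_card_fiberwise hmap
  rw [Set.ncard_eq_toFinset_card _ hfin, hcard]
  refine Finset.sum_congr rfl fun j hj => ?_
  rw [Finset.mem_Icc] at hj
  have hfib : ↑(hfin.toFinset.filter fun f => f ⟨k, le_rfl⟩ + 1 = j)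
      = {f | f ∈ StdSet r ℓ k n ∧ f ⟨k, le_rfl⟩ = j - 1} := by
    ext f
    simp only [Finset.coe_filter, Set.mem_setOf_eq, Set.Finite.mem_toFinset]
    constructor
    · rintro ⟨h1, h2⟩; exact ⟨h1, by omega⟩
    · rintro ⟨h1, h2⟩; exact ⟨h1, by omega⟩
  have hfc : (hfin.toFinset.filter fun f => f ⟨k, le_rfl⟩ + 1 = j).card
      = {f | f ∈ StdSet r ℓ k n ∧ f ⟨k, le_rfl⟩ = j - 1}.ncard := by
    rw [← hfib, Set.ncard_coe_finset]
  rw [hfc]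
  by_cases hkn : k * (j-1) ≤ n
  · rw [if_pos hkn]
    have hinj : Set.InjOn down {f | f ∈ StdSet r ℓ k n ∧ f ⟨k, le_rfl⟩ = j - 1} := by
      intro f hf f' hf' h
      have e1 := up_down f
      have e2 := up_down f'
      rw [hf.2] at e1
      rw [hf'.2] at e2
      rw [← e1, ← e2, h]
    rw [← down_image_fiber hr hlr hj.1 hj.2 hkn, Set.ncard_image_of_injOn hinj]
  · rw [if_neg hkn, Set.ncard_eq_zero (hfin.subset fun f hf => hf.1)]
    ext f
    simp only [Set.mem_setOf_eq, Set.mem_empty_iff_false, iff_false]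
    rintro ⟨⟨hw, _⟩, hfk⟩
    have hweq := weight_eq_down f
    rw [hw, hfk] at hweq
    omega
end HPrec

/-- For `r ≥ 2`, `k ≥ 1`, `1 ≤ ℓ ≤ r`:
`HP_ℓ^k(q) = Σ_{j=1}^{ℓ} q^{k(j-1)} HP_{r-j+1}^{k+1}(q)` in `ℚ[[q]]`. -/
theorem HP_recursion (r k ℓ : ℕ) (hr : 2 ≤ r) (hk : 1 ≤ k) (hl1 : 1 ≤ ℓ) (hlr : ℓ ≤ r) :
    HPser r ℓ k = ∑ j ∈ Finset.Icc 1 ℓ,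
      (PowerSeries.X : PowerSeries ℚ) ^ (k*(j-1)) * HPser r (r - j + 1) (k+1) := by
  ext n
  rw [map_sum]
  have hterm : ∀ j ∈ Finset.Icc 1 ℓ,
      (PowerSeries.coeff n) ((PowerSeries.X : PowerSeries ℚ) ^ (k*(j-1)) *
        HPser r (r - j + 1) (k+1))
      = if k*(j-1) ≤ n then ((gradedDim r (r-j+1) (k+1) (n - k*(j-1)) : ℚ)) else 0 := by
    intro j _
    rw [PowerSeries.coeff_X_pow_mul']
    split_ifs with h
    · rw [HPser, PowerSeries.coeff_mk]
    · rfl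
  rw [Finset.sum_congr rfl hterm]
  rw [HPser, PowerSeries.coeff_mk]
  rw [HPrec.gradedDim_eq r ℓ k n hk, HPrec.ncard_stdSet hr hk hl1 hlr n]
  rw [Nat.cast_sum]
  refine Finset.sum_congr rfl fun j _ => ?_
  rw [apply_ite (fun x : ℕ => (x : ℚ)), Nat.cast_zero,
    HPrec.gradedDim_eq r (r-j+1) (k+1) (n - k*(j-1)) (by omega)]
end

section
/- For all integers r ≥ 2, k ≥ 1, and 1 ≤ ℓ ≤ r, one has H_{ℓ,k}(q) = Σ_{j=1}^{ℓ} q^{k(j−1)} · H_{r−j+1,k+1}(q) in ℚ[[q]]; equivalently, for every n ≥ 0, C_{ℓ,k}(n) = Σ_{j=1}^{ℓ} C_{r−j+1,k+1}(n − k(j−1)), where summands with n − k(j−1) < 0 are taken to be zero. -/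
open PowerSeries Finset

/-- `C_{ℓ,k}(n)`: number of partitions of `n` satisfying the Gordon difference condition
for `r`, with all parts `≥ k` and at most `ℓ - 1` parts equal to `k`. -/
noncomputable def CCount (r ℓ k n : ℕ) : ℕ :=
  Nat.card {p : Nat.Partition n // GordonCond r p ∧ (∀ x ∈ p.parts, k ≤ x) ∧
    Multiset.count k p.parts ≤ ℓ - 1}

lemma fiber_empty (r k n j : ℕ) (h : ¬ k*(j-1) ≤ n) :
    Nat.card {p : Nat.Partition n // GordonCond r p ∧ (∀ x ∈ p.parts, k ≤ x) ∧
      Multiset.count k p.parts = j - 1} = 0 := by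
  rw [Nat.card_eq_zero]
  left
  constructor
  rintro ⟨p, -, -, hc⟩
  have hle : Multiset.replicate (j-1) k ≤ p.parts :=
    Multiset.le_count_iff_replicate_le.mp hc.ge
  obtain ⟨u, hu⟩ := Multiset.le_iff_exists_add.mp hle
  have := p.parts_sum
  rw [hu, Multiset.sum_add, Multiset.sum_replicate, smul_eq_mul] at this
  rw [mul_comm] at this; omega

lemma fiber_card (r k n j : ℕ) (hk : 1 ≤ k) (hj : 1 ≤ j) (hjr : j ≤ r)
    (hkn : k*(j-1) ≤ n) :
    Nat.card {p : Nat.Partition n // GordonCond r p ∧ (∀ x ∈ p.parts, k ≤ x) ∧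
      Multiset.count k p.parts = j - 1}
    = CCount r (r - j + 1) (k+1) (n - k*(j-1)) := by
  unfold CCount
  apply Nat.card_congr
  -- key multiset identities
  have hsplit : ∀ p : Nat.Partition n, Multiset.count k p.parts = j - 1 →
      Multiset.replicate (j-1) k + p.parts.filter (· ≠ k) = p.parts := by
    intro p hc
    refine Multiset.ext.mpr fun a => ?_
    rw [Multiset.count_add, Multiset.count_replicate, Multiset.count_filter]
    by_cases h : a = k
    · subst h; simp [hc]
    · simp [h, Ne.symm h]
  refine
    { toFun := fun p =>
        ⟨⟨p.1.parts.filter (· ≠ k),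
          fun hi => p.1.parts_pos (Multiset.mem_of_mem_filter hi), ?_⟩, ?_, ?_, ?_⟩
      invFun := fun q =>
        ⟨⟨Multiset.replicate (j-1) k + q.1.parts, ?_, ?_⟩, ?_, ?_, ?_⟩
      left_inv := ?_
      right_inv := ?_ }
  · -- sum of filtered parts
    have h1 := hsplit p.1 p.2.2.2
    have h2 := p.1.parts_sum
    rw [← h1, Multiset.sum_add, Multiset.sum_replicate, smul_eq_mul] at h2
    have hm : (j-1)*k = k*(j-1) := mul_comm _ _
    omega
  · -- Gordon for filtered
    intro a ha
    dsimp only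
    have := p.2.1 a ha
    have c1 := Multiset.count_le_of_le a (Multiset.filter_le (· ≠ k) p.1.parts)
    have c2 := Multiset.count_le_of_le (a+1) (Multiset.filter_le (· ≠ k) p.1.parts)
    omega
  · -- parts ≥ k+1
    intro x hx
    rw [Multiset.mem_filter] at hx
    have := p.2.2.1 x hx.1
    have hxk : x ≠ k := hx.2
    omega
  · -- count (k+1) ≤ (r-j+1)-1
    have hG := p.2.1 k hk
    have hc := p.2.2.2
    rw [Multiset.count_filter]
    simp only [ne_eq, Nat.succ_ne_self, not_false_eq_true, if_true]
    omega
  · -- positivity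
    intro i hi
    rcases Multiset.mem_add.mp hi with h | h
    · rw [Multiset.eq_of_mem_replicate h]; omega
    · exact q.1.parts_pos h
  · -- sum
    rw [Multiset.sum_add, Multiset.sum_replicate, smul_eq_mul, q.1.parts_sum]
    have := mul_comm k (j-1)
    omega
  · -- Gordon for combined
    intro a ha
    have hq0 : ∀ b, b ≤ k → Multiset.count b q.1.parts = 0 := fun b hb =>
      Multiset.count_eq_zero_of_notMem fun hmem => by
        have := q.2.2.1 b hmem; omega
    have hGq := q.2.1 a ha
    have hck := q.2.2.2
    simp only [Multiset.count_add, Multiset.count_replicate]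
    split_ifs with h1 h2 h2
    · omega
    · have := hq0 a (by omega)
      subst h1
      omega
    · have e1 := hq0 a (by omega)
      have e2 := hq0 (a+1) (by omega)
      omega
    · omega
  · -- parts ≥ k
    intro x hx
    rcases Multiset.mem_add.mp hx with h | h
    · rw [Multiset.eq_of_mem_replicate h]
    · have := q.2.2.1 x h; omega
  · -- count k = j - 1
    have hq0 : Multiset.count k q.1.parts = 0 :=
      Multiset.count_eq_zero_of_notMem fun hmem => by
        have := q.2.2.1 k hmem; omega
    rw [Multiset.count_add, Multiset.count_replicate, if_pos rfl, hq0]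
    omega
  · -- left inverse
    intro p
    apply Subtype.ext
    apply Nat.Partition.ext
    exact hsplit p.1 p.2.2.2
  · -- right inverse
    intro q
    apply Subtype.ext
    apply Nat.Partition.ext
    show Multiset.filter _ (Multiset.replicate (j-1) k + q.1.parts) = q.1.parts
    refine Multiset.ext.mpr fun a => ?_
    rw [Multiset.count_filter]
    by_cases h : a = k
    · rw [if_neg (by simpa using h)]
      refine (Multiset.count_eq_zero_of_notMem fun hmem => ?_).symm
      have := q.2.2.1 a hmem
      omega
    · rw [if_pos h, Multiset.count_add, Multiset.count_replicate, if_neg (fun hh => h hh.symm), zero_add]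

lemma ccount_split (r ℓ k n : ℕ) (hl1 : 1 ≤ ℓ) :
    CCount r ℓ k n = ∑ j ∈ Finset.Icc 1 ℓ,
      Nat.card {p : Nat.Partition n // GordonCond r p ∧ (∀ x ∈ p.parts, k ≤ x) ∧
        Multiset.count k p.parts = j - 1} := by
  classical
  unfold CCount
  rw [Nat.card_eq_fintype_card, Fintype.card_subtype]
  rw [Finset.card_eq_sum_card_fiberwise
    (f := fun p : Nat.Partition n => Multiset.count k p.parts + 1) (t := Finset.Icc 1 ℓ)
    (fun p hp => by
      simp only [Finset.mem_coe, Finset.mem_filter] at hp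
      simp only [Finset.mem_coe, Finset.mem_Icc]
      omega)]
  refine Finset.sum_congr rfl fun j hj => ?_
  simp only [Finset.mem_Icc] at hj
  rw [Nat.card_eq_fintype_card, Fintype.card_subtype, Finset.filter_filter]
  congr 1
  apply Finset.filter_congr
  intro p _
  constructor
  · rintro ⟨⟨hG, hP, hc⟩, hf⟩
    exact ⟨hG, hP, by omega⟩
  · rintro ⟨hG, hP, hc⟩
    exact ⟨⟨hG, hP, by omega⟩, by omega⟩

/-- `H_{ℓ,k}(q) = Σ_{n ≥ 0} C_{ℓ,k}(n) qⁿ ∈ ℚ[[q]]`. -/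
noncomputable def Hseries (r ℓ k : ℕ) : PowerSeries ℚ :=
  PowerSeries.mk fun n => (CCount r ℓ k n : ℚ)

/-- For `r ≥ 2`, `k ≥ 1`, `1 ≤ ℓ ≤ r`:
`H_{ℓ,k}(q) = Σ_{j=1}^{ℓ} q^{k(j-1)} H_{r-j+1,k+1}(q)` in `ℚ[[q]]`; equivalently, for every
`n ≥ 0`, `C_{ℓ,k}(n) = Σ_{j=1}^{ℓ} C_{r-j+1,k+1}(n - k(j-1))`, summands with
`n - k(j-1) < 0` being zero. -/
theorem H_recursion (r k ℓ : ℕ) (hr : 2 ≤ r) (hk : 1 ≤ k) (hl1 : 1 ≤ ℓ) (hlr : ℓ ≤ r) :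
    (Hseries r ℓ k = ∑ j ∈ Finset.Icc 1 ℓ,
      (PowerSeries.X : PowerSeries ℚ) ^ (k*(j-1)) * Hseries r (r - j + 1) (k+1)) ∧
    (∀ n : ℕ, CCount r ℓ k n = ∑ j ∈ Finset.Icc 1 ℓ,
      if k*(j-1) ≤ n then CCount r (r - j + 1) (k+1) (n - k*(j-1)) else 0) := by
  have h2 : ∀ n : ℕ, CCount r ℓ k n = ∑ j ∈ Finset.Icc 1 ℓ,
      if k*(j-1) ≤ n then CCount r (r - j + 1) (k+1) (n - k*(j-1)) else 0 := by
    intro n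
    rw [ccount_split r ℓ k n hl1]
    refine Finset.sum_congr rfl fun j hj => ?_
    simp only [Finset.mem_Icc] at hj
    by_cases h : k*(j-1) ≤ n
    · rw [if_pos h, fiber_card r k n j hk hj.1 (hj.2.trans hlr) h]
    · rw [if_neg h, fiber_empty r k n j h]
  refine ⟨?_, h2⟩
  ext n
  rw [map_sum]
  simp only [PowerSeries.coeff_X_pow_mul', Hseries, PowerSeries.coeff_mk]
  rw [h2 n, Nat.cast_sum]
  refine Finset.sum_congr rfl fun j hj => ?_
  rw [Nat.cast_ite, Nat.cast_zero]
end

section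
/- For all integers r ≥ 2, 1 ≤ i ≤ r, J ≥ 0, and every integer d ≥ J + 1, one has the identity HP_i^{J+1}(q) = Σ_{j=1}^{r} B^J_{i,j,(r−1)d+j} · HP_{r−j+1}^{d+1}(q) in ℚ[[q]]. -/
open PowerSeries Finset

/-- The coefficients `B^J_{i,j,(r-1)d+j}` with `d = J + 1 + e`: `coefB r i J e j` is
`B^J_{i,j,(r-1)(J+1+e)+j}`, defined by the initial conditions at `d = J+1` and the recursion
`B^J_{i,j,(r-1)(d+1)+j} = q^{(d+1)(j-1)} Σ_{m=1}^{r-j+1} B^J_{i,m,(r-1)d+m}`. -/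
noncomputable def coefB (r i J : ℕ) : ℕ → ℕ → PowerSeries ℚ
  | 0, j => if j ≤ i then (PowerSeries.X : PowerSeries ℚ) ^ ((J+1)*(j-1)) else 0
  | e+1, j => (PowerSeries.X : PowerSeries ℚ) ^ ((J+1+(e+1))*(j-1)) *
      ∑ m ∈ Finset.Icc 1 (r - j + 1), coefB r i J e m

namespace HPaux

open MvPolynomial

/-- The index type of variables of `S_k`. -/
abbrev Idx (k : ℕ) := {m : ℕ // k ≤ m}

/-- Exponents of the generators of `P_k^ℓ`. -/
def Dgens (r ℓ k : ℕ) : Set (Idx k →₀ ℕ) :=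
  {s | s = Finsupp.single ⟨k, le_rfl⟩ ℓ ∨
    (∃ u, 1 ≤ u ∧ u ≤ ℓ - 1 ∧
      s = Finsupp.single ⟨k, le_rfl⟩ (ℓ - u) +
          Finsupp.single ⟨k+1, Nat.le_succ k⟩ (r - ℓ + u)) ∨
    (∃ a : ℕ, ∃ ha : k + 1 ≤ a, ∃ t, t ≤ r - 1 ∧
      s = Finsupp.single ⟨a, Nat.le_of_succ_le ha⟩ (r - t) +
          Finsupp.single (⟨a+1, by omega⟩ : Idx k) t)}

/-- Standard (non-divisible) exponents. -/
def Std (r ℓ k : ℕ) : Set (Idx k →₀ ℕ) :=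
  {α | ∀ s ∈ Dgens r ℓ k, ¬ s ≤ α}

/-- Standard exponents of weight `n`. -/
def StdN (r ℓ k n : ℕ) : Set (Idx k →₀ ℕ) :=
  {α | α ∈ Std r ℓ k ∧ Finsupp.weight (fun m : Idx k => (m : ℕ)) α = n}

lemma Pgens_eq (r ℓ k : ℕ) :
    Pgens r k ℓ = (fun s => MvPolynomial.monomial s (1 : ℚ)) '' Dgens r ℓ k := by
  ext f
  simp only [Pgens, Dgens, Set.mem_setOf_eq, Set.mem_image]
  constructor
  · rintro (rfl | ⟨u, h1, h2, rfl⟩ | ⟨a, ha, t, ht, rfl⟩)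
    · exact ⟨_, Or.inl rfl, (X_pow_eq_monomial).symm⟩
    · exact ⟨_, Or.inr (Or.inl ⟨u, h1, h2, rfl⟩),
        by rw [X_pow_eq_monomial, X_pow_eq_monomial, monomial_mul, one_mul]⟩
    · exact ⟨_, Or.inr (Or.inr ⟨a, ha, t, ht, rfl⟩),
        by rw [X_pow_eq_monomial, X_pow_eq_monomial, monomial_mul, one_mul]⟩
  · rintro ⟨s, (rfl | ⟨u, h1, h2, rfl⟩ | ⟨a, ha, t, ht, rfl⟩), rfl⟩
    · exact Or.inl X_pow_eq_monomial.symm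
    · exact Or.inr (Or.inl ⟨u, h1, h2,
        by rw [X_pow_eq_monomial, X_pow_eq_monomial, monomial_mul, one_mul]⟩)
    · exact Or.inr (Or.inr ⟨a, ha, t, ht,
        by rw [X_pow_eq_monomial, X_pow_eq_monomial, monomial_mul, one_mul]⟩)

lemma mem_PIdeal_iff {r ℓ k : ℕ} {f : MvPolynomial (Idx k) ℚ} :
    f ∈ PIdeal r ℓ k ↔ ∀ d ∈ f.support, ∃ s ∈ Dgens r ℓ k, s ≤ d := by
  rw [PIdeal, Pgens_eq, mem_ideal_span_monomial_image]

lemma stdN_finite {r ℓ k n : ℕ} (hk : 1 ≤ k) : (StdN r ℓ k n).Finite := by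
  classical
  have : {α : Idx k →₀ ℕ | Finsupp.weight (fun m : Idx k => (m : ℕ)) α = n}.Finite := by
    set w : Idx k → ℕ := fun m => (m : ℕ) with hw
    set B : Idx k →₀ ℕ :=
      Finsupp.onFinset ((Finset.range (n+1)).subtype (k ≤ ·))
        (fun m => if (m : ℕ) ≤ n then n else 0)
        (by
          intro m hm
          simp only [ne_eq, ite_eq_right_iff, not_forall] at hm
          obtain ⟨h1, h2⟩ := hm
          simp only [Finset.mem_subtype, Finset.mem_range]
          omega) with hB
    apply (Set.finite_Icc 0 B).subset
    intro α hα
    simp only [Set.mem_setOf_eq] at hα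
    simp only [Set.mem_Icc, zero_le, true_and]
    intro m
    rcases Nat.eq_zero_or_pos (α m) with h0 | hpos
    · simp [h0]
    · have hwm : (m : ℕ) ≤ Finsupp.weight w α := by
        have := Finsupp.le_weight_of_ne_zero' (w := w) (f := α) (s := m) (by omega)
        simpa [hw] using this
      have ham : α m ≤ Finsupp.weight w α := by
        have := Finsupp.le_weight (w := w) (s := m) (by simp [hw]; omega) α
        simpa using this
      rw [hα] at hwm ham
      have : B m = n := by
        simp [hB, Finsupp.onFinset_apply, hwm]
      omega
  exact this.subset fun α hα => hα.2

lemma gradedDim_eq_card {r ℓ k n : ℕ} (hk : 1 ≤ k) :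
    gradedDim r ℓ k n = Nat.card (StdN r ℓ k n) := by
  classical
  rw [gradedDim]
  have hfin : (StdN r ℓ k n).Finite := stdN_finite hk
  letI : Fintype (StdN r ℓ k n) := hfin.fintype
  set w : Idx k → ℕ := fun m => (m : ℕ) with hw
  set q := (Ideal.Quotient.mkₐ ℚ (PIdeal r ℓ k)).toLinearMap with hq
  have hqz : ∀ p : MvPolynomial (Idx k) ℚ, q p = 0 ↔ p ∈ PIdeal r ℓ k := fun p => by
    simp only [hq, AlgHom.toLinearMap_apply, Ideal.Quotient.mkₐ_eq_mk]
    exact Ideal.Quotient.eq_zero_iff_mem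
  set u : StdN r ℓ k n → MvPolynomial (Idx k) ℚ ⧸ PIdeal r ℓ k :=
    fun α => q (monomial α.1 1) with hu
  have hmono : ∀ (α : Idx k →₀ ℕ) (c : ℚ), monomial α c = c • monomial α (1:ℚ) := by
    intro α c; rw [smul_monomial, smul_eq_mul, mul_one]
  have hli : LinearIndependent ℚ u := by
    rw [linearIndependent_iff']
    intro s g hsum i hi
    by_contra hgi
    have hmem : (∑ α ∈ s, monomial α.1 (g α)) ∈ PIdeal r ℓ k := by
      rw [← hqz, map_sum, ← hsum]
      refine Finset.sum_congr rfl fun α _ => ?_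
      rw [hmono _ (g α), map_smul]
    have hco : coeff i.1 (∑ α ∈ s, monomial α.1 (g α)) = g i := by
      rw [coeff_sum, Finset.sum_eq_single i]
      · simp
      · intro b hb hbi
        simp only [MvPolynomial.coeff_monomial, ite_eq_right_iff]
        intro hbv; exact absurd (Subtype.ext hbv) hbi
      · intro h; exact absurd hi h
    have hsup : i.1 ∈ (∑ α ∈ s, monomial α.1 (g α)).support :=
      mem_support_iff.mpr (by rw [hco]; exact hgi)
    obtain ⟨gen, hgen, hle⟩ := mem_PIdeal_iff.mp hmem i.1 hsup
    exact i.2.1 gen hgen hle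
  have hspan : Submodule.map q (weightedHomogeneousSubmodule ℚ w n)
      = Submodule.span ℚ (Set.range u) := by
    apply le_antisymm
    · rintro x ⟨p, hp, rfl⟩
      rw [SetLike.mem_coe, mem_weightedHomogeneousSubmodule] at hp
      rw [← support_sum_monomial_coeff p, map_sum]
      refine Submodule.sum_mem _ fun d hd => ?_
      by_cases hstd : d ∈ Std r ℓ k
      · have : q (monomial d (coeff d p))
            = (coeff d p) • u ⟨d, hstd, hp (mem_support_iff.mp hd)⟩ := by
          rw [hu, ← map_smul, ← hmono]
        rw [this]
        exact Submodule.smul_mem _ _ (Submodule.subset_span ⟨_, rfl⟩)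
      · have : monomial d (coeff d p) ∈ PIdeal r ℓ k := by
          rw [mem_PIdeal_iff]
          intro d' hd'
          rw [support_monomial, if_neg (mem_support_iff.mp hd)] at hd'
          simp only [Finset.mem_singleton] at hd'
          subst hd'
          simp only [Std, Set.mem_setOf_eq, not_forall] at hstd
          obtain ⟨gen, hgen, hle⟩ := hstd
          exact ⟨gen, hgen, not_not.mp hle⟩
        rw [(hqz _).mpr this]
        exact Submodule.zero_mem _
    · rw [Submodule.span_le]
      rintro _ ⟨α, rfl⟩
      exact ⟨monomial α.1 1, (mem_weightedHomogeneousSubmodule _ _ _ _).mpr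
        (isWeightedHomogeneous_monomial _ _ _ α.2.2), rfl⟩
  rw [hspan, finrank_span_eq_card hli, Nat.card_eq_fintype_card]

/-- value of `α` at index `m`, as a plain function on `ℕ`. -/
def aval (k : ℕ) (α : Idx k →₀ ℕ) (m : ℕ) : ℕ := if h : k ≤ m then α ⟨m, h⟩ else 0

/-- the embedding `Idx (k+1) ↪ Idx k`. -/
def emb (k : ℕ) : Idx (k+1) ↪ Idx k :=
  ⟨fun m => ⟨m.1, Nat.le_of_succ_le m.2⟩,
    fun a b h => Subtype.ext (congrArg Subtype.val h : _)⟩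

/-- restriction of exponents to variables `≥ k+1`. -/
noncomputable def res (k : ℕ) (α : Idx k →₀ ℕ) : Idx (k+1) →₀ ℕ :=
  Finsupp.comapDomain (emb k) α ((emb k).injective.injOn)

/-- extension: put exponent `c` on `x_k`. -/
noncomputable def extendF (k c : ℕ) (β : Idx (k+1) →₀ ℕ) : Idx k →₀ ℕ :=
  Finsupp.single ⟨k, le_rfl⟩ c + Finsupp.embDomain (emb k) β

lemma aval_res {k m : ℕ} (α : Idx k →₀ ℕ) (h : k+1 ≤ m) :
    aval (k+1) (res k α) m = aval k α m := by
  simp only [aval, dif_pos h, dif_pos (Nat.le_of_succ_le h)]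
  rfl

lemma aval_extend_self {k c : ℕ} (β : Idx (k+1) →₀ ℕ) :
    aval k (extendF k c β) k = c := by
  simp only [aval, dif_pos le_rfl, extendF, Finsupp.add_apply]
  rw [Finsupp.single_apply, if_pos rfl, Finsupp.embDomain_notin_range, add_zero]
  rintro ⟨⟨m, hm⟩, he⟩
  have : m = k := congrArg Subtype.val he
  omega

lemma aval_extend {k c m : ℕ} (β : Idx (k+1) →₀ ℕ) (h : k+1 ≤ m) :
    aval k (extendF k c β) m = aval (k+1) β m := by
  simp only [aval, dif_pos h, dif_pos (Nat.le_of_succ_le h), extendF, Finsupp.add_apply]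
  rw [Finsupp.single_apply, if_neg (by intro he; have : k = m := congrArg Subtype.val he; omega),
    zero_add]
  exact Finsupp.embDomain_apply_self (emb k) β ⟨m, h⟩

lemma res_extend {k c : ℕ} (β : Idx (k+1) →₀ ℕ) : res k (extendF k c β) = β := by
  ext m
  have : res k (extendF k c β) m = aval k (extendF k c β) m.1 := by
    simp only [aval, dif_pos (Nat.le_of_succ_le m.2)]; rfl
  rw [this, aval_extend β m.2]
  rw [aval, dif_pos m.2]

lemma extend_res {k : ℕ} (α : Idx k →₀ ℕ) :
    extendF k (aval k α k) (res k α) = α := by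
  ext m
  rcases Nat.lt_or_ge k m.1 with h | h
  · have h1 : k + 1 ≤ m.1 := h
    have : extendF k (aval k α k) (res k α) m
        = aval k (extendF k (aval k α k) (res k α)) m.1 := by
      simp only [aval, dif_pos m.2]
    rw [this, aval_extend _ h1, aval_res _ h1]
    simp [aval, dif_pos m.2]
  · have hm : m = ⟨k, le_rfl⟩ := Subtype.ext (le_antisymm h m.2)
    subst hm
    have : extendF k (aval k α k) (res k α) ⟨k, le_rfl⟩
        = aval k (extendF k (aval k α k) (res k α)) k := by
      simp only [aval, dif_pos le_rfl]
    rw [this, aval_extend_self]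
    simp [aval]

lemma weight_extend {k c : ℕ} (β : Idx (k+1) →₀ ℕ) :
    Finsupp.weight (fun m : Idx k => (m : ℕ)) (extendF k c β)
      = k * c + Finsupp.weight (fun m : Idx (k+1) => (m : ℕ)) β := by
  rw [extendF, map_add]
  congr 1
  · show Finsupp.linearCombination ℕ _ _ = _
    rw [Finsupp.linearCombination_single]
    simp [mul_comm]
  · show Finsupp.linearCombination ℕ _ _ = Finsupp.linearCombination ℕ _ _
    rw [Finsupp.linearCombination_embDomain]
    rfl

lemma weight_decomp {k : ℕ} (α : Idx k →₀ ℕ) :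
    Finsupp.weight (fun m : Idx k => (m : ℕ)) α
      = k * aval k α k + Finsupp.weight (fun m : Idx (k+1) => (m : ℕ)) (res k α) := by
  conv_lhs => rw [← extend_res α]
  rw [weight_extend]

lemma single_add_single_le {τ : Type*} [DecidableEq τ] {i j : τ} (hij : i ≠ j) {a b : ℕ}
    {α : τ →₀ ℕ} :
    Finsupp.single i a + Finsupp.single j b ≤ α ↔ a ≤ α i ∧ b ≤ α j := by
  rw [Finsupp.le_def]
  constructor
  · intro h
    constructor
    · have := h i; simpa [Finsupp.single_apply, hij.symm] using this
    · have := h j; simpa [Finsupp.single_apply, hij] using this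
  · rintro ⟨h1, h2⟩ m
    rcases eq_or_ne m i with rfl | hi
    · simpa [Finsupp.single_apply, hij.symm] using h1
    · rcases eq_or_ne m j with rfl | hj
      · simpa [Finsupp.single_apply, hij] using h2
      · simp [Finsupp.single_apply, Ne.symm hi, Ne.symm hj]

lemma mem_Std_iff {r ℓ k : ℕ} {α : Idx k →₀ ℕ} :
    α ∈ Std r ℓ k ↔
      aval k α k < ℓ ∧
      (∀ u, 1 ≤ u → u ≤ ℓ-1 → ¬(ℓ-u ≤ aval k α k ∧ r-ℓ+u ≤ aval k α (k+1))) ∧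
      (∀ a, k+1 ≤ a → ∀ t, t ≤ r-1 → ¬(r-t ≤ aval k α a ∧ t ≤ aval k α (a+1))) := by
  have havk : ∀ (m : ℕ) (h : k ≤ m), α ⟨m, h⟩ = aval k α m := by
    intro m h; simp [aval, dif_pos h]
  have hne : ∀ (a : ℕ) (h1 : k ≤ a) (h2 : k ≤ a + 1),
      (⟨a, h1⟩ : Idx k) ≠ ⟨a+1, h2⟩ := by
    intro a h1 h2 he
    have : a = a + 1 := congrArg Subtype.val he
    omega
  constructor
  · intro h
    refine ⟨?_, ?_, ?_⟩
    · have := h _ (Or.inl rfl)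
      rw [Finsupp.single_le_iff, havk] at this
      omega
    · intro u h1 h2 hcon
      refine h _ (Or.inr (Or.inl ⟨u, h1, h2, rfl⟩)) ?_
      rw [single_add_single_le (hne k le_rfl (Nat.le_succ k)), havk, havk]
      exact hcon
    · intro a ha t ht hcon
      refine h _ (Or.inr (Or.inr ⟨a, ha, t, ht, rfl⟩)) ?_
      rw [single_add_single_le (hne a (Nat.le_of_succ_le ha) (by omega)), havk, havk]
      exact hcon
  · rintro ⟨h1, h2, h3⟩ s (rfl | ⟨u, hu1, hu2, rfl⟩ | ⟨a, ha, t, ht, rfl⟩) hle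
    · rw [Finsupp.single_le_iff, havk] at hle
      omega
    · rw [single_add_single_le (hne k le_rfl (Nat.le_succ k)), havk, havk] at hle
      exact h2 u hu1 hu2 hle
    · rw [single_add_single_le (hne a (Nat.le_of_succ_le ha) (by omega)), havk, havk] at hle
      exact h3 a ha t ht hle

lemma std_res {r ℓ k c : ℕ} (hr : 2 ≤ r) (hlr : ℓ ≤ r) (hc : c < ℓ)
    {α : Idx k →₀ ℕ} (hαk : aval k α k = c) :
    α ∈ Std r ℓ k ↔ res k α ∈ Std r (r-c) (k+1) := by
  rw [mem_Std_iff, mem_Std_iff]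
  have hres : ∀ m, k+1 ≤ m → aval (k+1) (res k α) m = aval k α m :=
    fun m h => aval_res α h
  constructor
  · rintro ⟨h1, h2, h3⟩
    refine ⟨?_, ?_, ?_⟩
    · rw [hres _ le_rfl]
      by_contra hA
      push_neg at hA
      rcases Nat.eq_zero_or_pos c with hc0 | hc1
      · exact h3 (k+1) le_rfl 0 (by omega) ⟨by omega, by omega⟩
      · exact h2 (ℓ - c) (by omega) (by omega) ⟨by omega, by omega⟩
    · intro u hu1 hu2 hcon
      rw [hres _ le_rfl, hres _ (by omega)] at hcon
      exact h3 (k+1) le_rfl (c+u) (by omega) ⟨by omega, by omega⟩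
    · intro a ha t ht hcon
      rw [hres a (by omega), hres (a+1) (by omega)] at hcon
      exact h3 a (by omega) t ht hcon
  · rintro ⟨h1, h2, h3⟩
    rw [hres _ le_rfl] at h1
    refine ⟨by omega, ?_, ?_⟩
    · intro u hu1 hu2 hcon
      omega
    · intro a ha t ht hcon
      rcases Nat.lt_or_ge a (k+2) with ha2 | ha2
      · have hak : a = k+1 := by omega
        subst hak
        refine h2 (t - c) (by omega) (by omega) ?_
        rw [hres _ le_rfl, hres _ (by omega)]
        exact ⟨by omega, by omega⟩
      · refine h3 a ha2 t ht ?_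
        rw [hres a (by omega), hres (a+1) (by omega)]
        exact hcon

lemma card_step {r ℓ k n : ℕ} (hk : 1 ≤ k) (hl1 : 1 ≤ ℓ) (hlr : ℓ ≤ r) (hr : 2 ≤ r) :
    Nat.card (StdN r ℓ k n) = ∑ j ∈ Icc 1 ℓ,
      (if k * (j-1) ≤ n then Nat.card (StdN r (r-j+1) (k+1) (n - k*(j-1))) else 0) := by
  classical
  have hS : (StdN r ℓ k n).Finite := stdN_finite hk
  rw [Nat.card_coe_set_eq, Set.ncard_eq_toFinset_card _ hS]
  rw [Finset.card_eq_sum_card_fiberwise (f := fun α => aval k α k + 1) (t := Icc 1 ℓ)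
    (fun α hα => by
      rw [Finset.mem_coe, Set.Finite.mem_toFinset] at hα
      have := (mem_Std_iff.mp hα.1).1
      simp only [Finset.mem_coe, Finset.mem_Icc]
      omega)]
  refine Finset.sum_congr rfl fun j hj => ?_
  rw [Finset.mem_Icc] at hj
  have hrj : r - (j-1) = r - j + 1 := by omega
  by_cases hjn : k * (j-1) ≤ n
  · rw [if_pos hjn]
    have hT : (StdN r (r-j+1) (k+1) (n - k*(j-1))).Finite := stdN_finite (by omega)
    rw [Nat.card_coe_set_eq, Set.ncard_eq_toFinset_card _ hT]
    refine Finset.card_nbij' (res k) (extendF k (j-1)) ?_ ?_ ?_ ?_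
    · intro α hα
      simp only [Finset.mem_coe, Finset.mem_filter, Set.Finite.mem_toFinset] at hα
      obtain ⟨⟨hstd, hwt⟩, hfib⟩ := hα
      have hαk : aval k α k = j - 1 := by omega
      have hc : j - 1 < ℓ := by omega
      rw [Finset.mem_coe, Set.Finite.mem_toFinset]
      constructor
      · have := (std_res hr hlr hc hαk).mp hstd
        rwa [hrj] at this
      · have := weight_decomp α
        rw [hwt, hαk] at this
        have hres : Finsupp.weight (fun m : Idx (k+1) => (m : ℕ)) (res k α)
            = n - k * (j-1) := by omega
        exact hres
    · intro β hβ
      rw [Finset.mem_coe, Set.Finite.mem_toFinset] at hβ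
      obtain ⟨hstd, hwt⟩ := hβ
      simp only [Finset.mem_coe, Finset.mem_filter, Set.Finite.mem_toFinset]
      have hαk : aval k (extendF k (j-1) β) k = j - 1 := aval_extend_self β
      refine ⟨⟨?_, ?_⟩, by omega⟩
      · rw [std_res hr hlr (by omega) hαk, res_extend, hrj]
        exact hstd
      · rw [weight_extend, hwt]
        omega
    · intro α hα
      simp only [Finset.mem_coe, Finset.mem_filter, Set.Finite.mem_toFinset] at hα
      have hαk : aval k α k = j - 1 := by omega
      rw [← hαk, extend_res]
    · intro β hβ
      exact res_extend β
  · rw [if_neg hjn, Finset.card_eq_zero, Finset.filter_eq_empty_iff]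
    intro α hα
    rw [Set.Finite.mem_toFinset] at hα
    intro hfib
    have hαk : aval k α k = j - 1 := by omega
    have := weight_decomp α
    rw [hα.2, hαk] at this
    omega

lemma HP_step {r ℓ k : ℕ} (hk : 1 ≤ k) (hl1 : 1 ≤ ℓ) (hlr : ℓ ≤ r) (hr : 2 ≤ r) :
    HPser r ℓ k = ∑ j ∈ Icc 1 ℓ,
      (PowerSeries.X : PowerSeries ℚ) ^ (k*(j-1)) * HPser r (r-j+1) (k+1) := by
  ext n
  rw [map_sum]
  rw [HPser, PowerSeries.coeff_mk]
  rw [gradedDim_eq_card hk, card_step hk hl1 hlr hr]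
  push_cast
  refine Finset.sum_congr rfl fun j hj => ?_
  rw [PowerSeries.coeff_X_pow_mul']
  rw [Finset.mem_Icc] at hj
  by_cases hjn : k * (j-1) ≤ n
  · rw [if_pos hjn, if_pos hjn, HPser, PowerSeries.coeff_mk,
      gradedDim_eq_card (by omega : 1 ≤ k+1)]
  · rw [if_neg hjn, if_neg hjn]

end HPaux

theorem HP_coefB_aux (r i J : ℕ) (hr : 2 ≤ r) (hi1 : 1 ≤ i) (hir : i ≤ r) :
    ∀ e, HPser r i (J+1) = ∑ j ∈ Finset.Icc 1 r,
      coefB r i J e j * HPser r (r - j + 1) (J+1+e+1) := by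
  intro e
  induction e with
  | zero =>
    have hbase := HPaux.HP_step (r := r) (ℓ := i) (k := J+1) (by omega) hi1 hir hr
    rw [hbase]
    have hfilter : Finset.Icc 1 i = (Finset.Icc 1 r).filter (· ≤ i) := by
      ext x
      simp only [Finset.mem_Icc, Finset.mem_filter]
      omega
    rw [hfilter, Finset.sum_filter]
    refine Finset.sum_congr rfl fun j hj => ?_
    simp only [coefB]
    by_cases hji : j ≤ i
    · rw [if_pos hji, if_pos hji]
    · rw [if_neg hji, if_neg hji, zero_mul]
  | succ e ih =>
    rw [ih]
    have hswap : ∀ F : ℕ → ℕ → PowerSeries ℚ,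
        ∑ j ∈ Finset.Icc 1 r, ∑ m ∈ Finset.Icc 1 (r - j + 1), F j m
          = ∑ m ∈ Finset.Icc 1 r, ∑ j ∈ Finset.Icc 1 (r - m + 1), F j m := by
      intro F
      rw [Finset.sum_sigma', Finset.sum_sigma']
      refine Finset.sum_nbij' (fun p => ⟨p.2, p.1⟩) (fun p => ⟨p.2, p.1⟩) ?_ ?_ ?_ ?_ ?_
      · rintro ⟨j, m⟩ hp
        simp only [Finset.mem_sigma, Finset.mem_Icc] at hp ⊢
        omega
      · rintro ⟨m, j⟩ hp
        simp only [Finset.mem_sigma, Finset.mem_Icc] at hp ⊢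
        omega
      · rintro ⟨j, m⟩ _; rfl
      · rintro ⟨m, j⟩ _; rfl
      · rintro ⟨j, m⟩ _; rfl
    calc ∑ m ∈ Finset.Icc 1 r, coefB r i J e m * HPser r (r - m + 1) (J+1+e+1)
        = ∑ m ∈ Finset.Icc 1 r, coefB r i J e m *
            (∑ j ∈ Finset.Icc 1 (r - m + 1),
              (PowerSeries.X : PowerSeries ℚ) ^ ((J+1+e+1)*(j-1)) *
                HPser r (r-j+1) (J+1+e+1+1)) := by
          refine Finset.sum_congr rfl fun m hm => ?_
          rw [Finset.mem_Icc] at hm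
          rw [← HPaux.HP_step (by omega) (by omega) (by omega) hr]
      _ = ∑ m ∈ Finset.Icc 1 r, ∑ j ∈ Finset.Icc 1 (r - m + 1),
            coefB r i J e m * ((PowerSeries.X : PowerSeries ℚ) ^ ((J+1+e+1)*(j-1)) *
              HPser r (r-j+1) (J+1+e+1+1)) := by
          refine Finset.sum_congr rfl fun m hm => ?_
          rw [Finset.mul_sum]
      _ = ∑ j ∈ Finset.Icc 1 r, ∑ m ∈ Finset.Icc 1 (r - j + 1),
            coefB r i J e m * ((PowerSeries.X : PowerSeries ℚ) ^ ((J+1+e+1)*(j-1)) *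
              HPser r (r-j+1) (J+1+e+1+1)) := by
          rw [hswap fun j m => coefB r i J e m *
            ((PowerSeries.X : PowerSeries ℚ) ^ ((J+1+e+1)*(j-1)) *
              HPser r (r-j+1) (J+1+e+1+1))]
      _ = ∑ j ∈ Finset.Icc 1 r, coefB r i J (e+1) j * HPser r (r - j + 1) (J+1+(e+1)+1) := by
          refine Finset.sum_congr rfl fun j hj => ?_
          simp only [coefB]
          rw [show J+1+(e+1) = J+1+e+1 from rfl, mul_assoc, Finset.sum_mul, Finset.mul_sum]
          refine Finset.sum_congr rfl fun m hm => by ring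

/-- For `r ≥ 2`, `1 ≤ i ≤ r`, `J ≥ 0`, and every `d ≥ J + 1`:
`HP_i^{J+1}(q) = Σ_{j=1}^{r} B^J_{i,j,(r-1)d+j} · HP_{r-j+1}^{d+1}(q)` in `ℚ[[q]]`. -/
theorem HP_coefB_recursion (r i J d : ℕ) (hr : 2 ≤ r) (hi1 : 1 ≤ i) (hir : i ≤ r)
    (hd : J + 1 ≤ d) :
    HPser r i (J+1) = ∑ j ∈ Finset.Icc 1 r,
      coefB r i J (d - (J+1)) j * HPser r (r - j + 1) (d+1) := by
  have := HP_coefB_aux r i J hr hi1 hir (d - (J+1))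
  rwa [show J + 1 + (d - (J+1)) + 1 = d + 1 by omega] at this
end

section
/- For all integers r ≥ 2, 1 ≤ i ≤ r, J ≥ 0, and every integer d ≥ J + 1, one has the identity ℬ_{r,i,J}(q) = Σ_{j=1}^{r} B^J_{i,j,(r−1)d+j} · H_{r−j+1,d+1}(q) in ℚ[[q]]. -/
open PowerSeries Finset

/-- transport a partition along an equality of the total. -/
def pcast {m n : ℕ} (h : m = n) (p : Nat.Partition m) : Nat.Partition n :=
  ⟨p.parts, p.parts_pos, h ▸ p.parts_sum⟩

lemma sum_filter_ne {n : ℕ} (p : Nat.Partition n) (k : ℕ) :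
    (p.parts.filter (· ≠ k)).sum = n - k * Multiset.count k p.parts := by
  have hsplit := Multiset.filter_add_not (· = k) p.parts
  have h1 : p.parts.filter (· = k) = Multiset.replicate (Multiset.count k p.parts) k :=
    Multiset.filter_eq' p.parts k
  have h2 : (p.parts.filter (· = k)).sum + (p.parts.filter (fun a => ¬ a = k)).sum = n := by
    rw [← Multiset.sum_add, hsplit, p.parts_sum]
  rw [h1, Multiset.sum_replicate, smul_eq_mul, Nat.mul_comm] at h2
  have h3 : (p.parts.filter (fun a => ¬ a = k)) = (p.parts.filter (· ≠ k)) := rfl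
  rw [h3] at h2
  omega

/-- remove all parts equal to `k`. -/
def fwdP {n : ℕ} (k : ℕ) (p : Nat.Partition n) : Nat.Partition (n - k * Multiset.count k p.parts) where
  parts := p.parts.filter (· ≠ k)
  parts_pos := fun hi => p.parts_pos (Multiset.mem_filter.mp hi).1
  parts_sum := sum_filter_ne p k

/-- add `j` parts equal to `k`. -/
def bwdP {m : ℕ} (k j : ℕ) (hk : 1 ≤ k) (q : Nat.Partition m) : Nat.Partition (m + k * j) where
  parts := q.parts + Multiset.replicate j k
  parts_pos := fun hi => by
    rcases Multiset.mem_add.mp hi with h | h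
    · exact q.parts_pos h
    · rw [Multiset.eq_of_mem_replicate h]; omega
  parts_sum := by
    rw [Multiset.sum_add, Multiset.sum_replicate, smul_eq_mul, q.parts_sum, Nat.mul_comm]

def myEquiv (r ℓ k n j : ℕ) (hk : 1 ≤ k) (hj1 : 1 ≤ j) (hjℓ : j ≤ ℓ) (hℓr : ℓ ≤ r)
    (hkn : k*(j-1) ≤ n) :
    {p : Nat.Partition n // (GordonCond r p ∧ (∀ x ∈ p.parts, k ≤ x) ∧
        Multiset.count k p.parts ≤ ℓ - 1) ∧ Multiset.count k p.parts + 1 = j} ≃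
    {q : Nat.Partition (n - k*(j-1)) // GordonCond r q ∧ (∀ x ∈ q.parts, k + 1 ≤ x) ∧
        Multiset.count (k+1) q.parts ≤ r - j + 1 - 1} where
  toFun p := ⟨pcast (by rw [show Multiset.count k p.1.parts = j - 1 from by have := p.2.2; omega]) (fwdP k p.1), by
    obtain ⟨⟨hG, hge, hle⟩, hcnt⟩ := p.2
    refine ⟨?_, ?_, ?_⟩
    · intro a ha
      calc Multiset.count a (p.1.parts.filter (· ≠ k))
            + Multiset.count (a+1) (p.1.parts.filter (· ≠ k))
          ≤ Multiset.count a p.1.parts + Multiset.count (a+1) p.1.parts :=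
            Nat.add_le_add (Multiset.count_le_of_le _ (Multiset.filter_le _ _))
              (Multiset.count_le_of_le _ (Multiset.filter_le _ _))
        _ ≤ r - 1 := hG a ha
    · intro x hx
      obtain ⟨hxp, hxk⟩ := Multiset.mem_filter.mp hx
      have h1 := hge x hxp
      have hxk' : x ≠ k := by simpa using hxk
      omega
    · show Multiset.count (k+1) (p.1.parts.filter (· ≠ k)) ≤ r - j + 1 - 1
      have h1 : Multiset.count (k+1) (p.1.parts.filter (· ≠ k))
          = Multiset.count (k+1) p.1.parts := by
        rw [Multiset.count_filter]; simp
      have h2 := hG k hk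
      omega⟩
  invFun q := ⟨pcast (by omega) (bwdP k (j-1) hk q.1), by
    obtain ⟨hG, hge, hcnt⟩ := q.2
    have hq0 : ∀ a, a ≤ k → Multiset.count a q.1.parts = 0 := by
      intro a hak
      rw [Multiset.count_eq_zero]
      intro hmem
      have := hge a hmem; omega
    have hcount : ∀ a, Multiset.count a (q.1.parts + Multiset.replicate (j-1) k)
        = Multiset.count a q.1.parts + (if a = k then j - 1 else 0) := by
      intro a
      rw [Multiset.count_add, Multiset.count_replicate]
      simp [eq_comm]
    refine ⟨⟨?_, ?_, ?_⟩, ?_⟩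
    · intro a ha
      show Multiset.count a (q.1.parts + Multiset.replicate (j-1) k)
        + Multiset.count (a+1) (q.1.parts + Multiset.replicate (j-1) k) ≤ r - 1
      rw [hcount, hcount]
      by_cases h1 : a = k
      · subst h1
        rw [if_pos rfl, if_neg (by omega), hq0 a le_rfl]
        omega
      · rw [if_neg h1]
        by_cases h2 : a + 1 = k
        · rw [if_pos h2, hq0 a (by omega), hq0 (a+1) (by omega)]
          omega
        · rw [if_neg h2]
          have := hG a ha
          omega
    · intro x hx
      rcases Multiset.mem_add.mp hx with h | h
      · have := hge x h; omega
      · rw [Multiset.eq_of_mem_replicate h]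
    · show Multiset.count k (q.1.parts + Multiset.replicate (j-1) k) ≤ ℓ - 1
      rw [hcount, if_pos rfl, hq0 k le_rfl]
      omega
    · show Multiset.count k (q.1.parts + Multiset.replicate (j-1) k) + 1 = j
      rw [hcount, if_pos rfl, hq0 k le_rfl]
      omega⟩
  left_inv p := by
    obtain ⟨⟨hG, hge, hle⟩, hcnt⟩ := p.2
    apply Subtype.ext
    apply Nat.Partition.ext
    show p.1.parts.filter (· ≠ k) + Multiset.replicate (j-1) k = p.1.parts
    have h1 : p.1.parts.filter (· = k) = Multiset.replicate (Multiset.count k p.1.parts) k :=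
      Multiset.filter_eq' p.1.parts k
    have hc : Multiset.count k p.1.parts = j - 1 := by omega
    rw [hc] at h1
    calc p.1.parts.filter (· ≠ k) + Multiset.replicate (j-1) k
        = p.1.parts.filter (· = k) + p.1.parts.filter (fun a => ¬ a = k) := by
          rw [h1, add_comm]
      _ = p.1.parts := Multiset.filter_add_not _ _
  right_inv q := by
    obtain ⟨hG, hge, hcnt⟩ := q.2
    apply Subtype.ext
    apply Nat.Partition.ext
    show (q.1.parts + Multiset.replicate (j-1) k).filter (· ≠ k) = q.1.parts
    rw [Multiset.filter_add]
    have h1 : q.1.parts.filter (· ≠ k) = q.1.parts := by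
      rw [Multiset.filter_eq_self]
      intro a ha
      have := hge a ha
      simp only [ne_eq]
      omega
    have h2 : (Multiset.replicate (j-1) k).filter (· ≠ k) = 0 := by
      rw [Multiset.filter_eq_nil]
      intro a ha
      rw [Multiset.eq_of_mem_replicate ha]
      simp
    rw [h1, h2, add_zero]

lemma CCount_step (r ℓ k n : ℕ) (hk : 1 ≤ k) (hℓ1 : 1 ≤ ℓ) (hℓr : ℓ ≤ r) :
    CCount r ℓ k n = ∑ j ∈ Finset.Icc 1 ℓ,
      if k*(j-1) ≤ n then CCount r (r-j+1) (k+1) (n - k*(j-1)) else 0 := by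
  classical
  rw [CCount, Nat.card_eq_fintype_card, Fintype.card_subtype]
  rw [Finset.card_eq_sum_card_fiberwise
    (f := fun p : Nat.Partition n => Multiset.count k p.parts + 1) (t := Finset.Icc 1 ℓ)
    (by intro p hp
        simp only [Finset.mem_coe, Finset.mem_filter] at hp
        have := hp.2.2.2
        simp only [Finset.mem_coe, Finset.mem_Icc]
        omega)]
  refine Finset.sum_congr rfl fun j hj => ?_
  simp only [Finset.mem_Icc] at hj
  rw [Finset.filter_filter]
  by_cases hkn : k*(j-1) ≤ n
  · rw [if_pos hkn, CCount, Nat.card_eq_fintype_card, Fintype.card_subtype,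
      ← Fintype.card_subtype, ← Fintype.card_subtype]
    exact Fintype.card_congr (myEquiv r ℓ k n j hk hj.1 hj.2 hℓr hkn)
  · rw [if_neg hkn, Finset.card_eq_zero, Finset.filter_eq_empty_iff]
    rintro p -
    rintro ⟨⟨hG, hge, hcnt⟩, hcount⟩
    apply hkn
    have hle : Multiset.replicate (j-1) k ≤ p.parts := by
      have : j - 1 ≤ Multiset.count k p.parts := by omega
      exact Multiset.le_count_iff_replicate_le.mp this
    obtain ⟨u, hu⟩ := Multiset.le_iff_exists_add.mp hle
    have hsum : p.parts.sum = (Multiset.replicate (j-1) k).sum + u.sum := by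
      rw [hu, Multiset.sum_add]
    rw [Multiset.sum_replicate, smul_eq_mul, Nat.mul_comm, p.parts_sum] at hsum
    omega

lemma Hseries_step (r ℓ k : ℕ) (hk : 1 ≤ k) (hℓ1 : 1 ≤ ℓ) (hℓr : ℓ ≤ r) :
    Hseries r ℓ k = ∑ j ∈ Finset.Icc 1 ℓ,
      (PowerSeries.X : PowerSeries ℚ) ^ (k*(j-1)) * Hseries r (r-j+1) (k+1) := by
  ext n
  rw [map_sum]
  simp only [Hseries, coeff_mk, PowerSeries.coeff_X_pow_mul']
  rw [CCount_step r ℓ k n hk hℓ1 hℓr]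
  push_cast
  refine Finset.sum_congr rfl fun j hj => ?_
  split_ifs <;> simp

lemma Bseries_eq (r i J : ℕ) : Bseries r i J = Hseries r i (J+1) := rfl

lemma aux_main (r i J : ℕ) (hi1 : 1 ≤ i) (hir : i ≤ r) (e : ℕ) :
    Hseries r i (J+1) = ∑ j ∈ Finset.Icc 1 r,
      coefB r i J e j * Hseries r (r-j+1) (J+1+e+1) := by
  induction e with
  | zero =>
    rw [Hseries_step r i (J+1) (by omega) hi1 hir]
    rw [← Finset.sum_subset (Finset.Icc_subset_Icc_right hir)
      (fun j hj hj' => by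
        have h1 : ¬ j ≤ i := by
          simp only [Finset.mem_Icc] at hj hj'
          omega
        simp [coefB, h1])]
    refine Finset.sum_congr rfl fun j hj => ?_
    simp only [Finset.mem_Icc] at hj
    rw [show coefB r i J 0 j = (PowerSeries.X : PowerSeries ℚ) ^ ((J+1)*(j-1)) by
      simp [coefB, hj.2]]
  | succ e ih =>
    rw [ih]
    have hstep : ∀ m ∈ Finset.Icc 1 r, coefB r i J e m * Hseries r (r-m+1) (J+1+e+1)
        = ∑ j ∈ Finset.Icc 1 (r-m+1), coefB r i J e m *
            ((PowerSeries.X : PowerSeries ℚ) ^ ((J+1+e+1)*(j-1)) * Hseries r (r-j+1) (J+1+e+1+1)) := by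
      intro m hm
      simp only [Finset.mem_Icc] at hm
      rw [Hseries_step r (r-m+1) (J+1+e+1) (by omega) (by omega) (by omega), Finset.mul_sum]
    rw [Finset.sum_congr rfl hstep]
    -- swap the order of summation
    have hswap : ∑ m ∈ Finset.Icc 1 r, ∑ j ∈ Finset.Icc 1 (r-m+1),
          coefB r i J e m *
            ((PowerSeries.X : PowerSeries ℚ) ^ ((J+1+e+1)*(j-1)) * Hseries r (r-j+1) (J+1+e+1+1))
        = ∑ j ∈ Finset.Icc 1 r, ∑ m ∈ Finset.Icc 1 (r-j+1),
          coefB r i J e m *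
            ((PowerSeries.X : PowerSeries ℚ) ^ ((J+1+e+1)*(j-1)) * Hseries r (r-j+1) (J+1+e+1+1)) := by
      set F : ℕ → ℕ → PowerSeries ℚ := fun m j => coefB r i J e m *
            ((PowerSeries.X : PowerSeries ℚ) ^ ((J+1+e+1)*(j-1)) * Hseries r (r-j+1) (J+1+e+1+1))
        with hF
      have expand : ∀ s : ℕ, s ≤ r → ∀ G : ℕ → PowerSeries ℚ,
          ∑ x ∈ Finset.Icc 1 s, G x = ∑ x ∈ Finset.Icc 1 r, if x ∈ Finset.Icc 1 s then G x else 0 := by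
        intro s hs G
        rw [Finset.sum_ite_mem, Finset.inter_eq_right.mpr
          (Finset.Icc_subset_Icc_right hs)]
      calc ∑ m ∈ Finset.Icc 1 r, ∑ j ∈ Finset.Icc 1 (r-m+1), F m j
          = ∑ m ∈ Finset.Icc 1 r, ∑ j ∈ Finset.Icc 1 r, if j ∈ Finset.Icc 1 (r-m+1) then F m j else 0 := by
            refine Finset.sum_congr rfl fun m hm => ?_
            simp only [Finset.mem_Icc] at hm
            exact expand (r-m+1) (by omega) _
        _ = ∑ j ∈ Finset.Icc 1 r, ∑ m ∈ Finset.Icc 1 r, if j ∈ Finset.Icc 1 (r-m+1) then F m j else 0 :=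
            Finset.sum_comm
        _ = ∑ j ∈ Finset.Icc 1 r, ∑ m ∈ Finset.Icc 1 r, if m ∈ Finset.Icc 1 (r-j+1) then F m j else 0 := by
            refine Finset.sum_congr rfl fun j hj => Finset.sum_congr rfl fun m hm => ?_
            simp only [Finset.mem_Icc] at hj hm ⊢
            have : (1 ≤ j ∧ j ≤ r - m + 1) ↔ (1 ≤ m ∧ m ≤ r - j + 1) := by omega
            simp only [this]
        _ = ∑ j ∈ Finset.Icc 1 r, ∑ m ∈ Finset.Icc 1 (r-j+1), F m j := by
            refine Finset.sum_congr rfl fun j hj => ?_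
            simp only [Finset.mem_Icc] at hj
            exact (expand (r-j+1) (by omega) _).symm
    rw [hswap]
    refine Finset.sum_congr rfl fun j hj => ?_
    show _ = coefB r i J (e+1) j * Hseries r (r-j+1) (J+1+(e+1)+1)
    rw [show coefB r i J (e+1) j = (PowerSeries.X : PowerSeries ℚ) ^ ((J+1+(e+1))*(j-1)) *
      ∑ m ∈ Finset.Icc 1 (r - j + 1), coefB r i J e m from rfl]
    rw [mul_assoc, Finset.sum_mul, Finset.mul_sum]
    refine Finset.sum_congr rfl fun m hm => ?_
    ring


/-- For `r ≥ 2`, `1 ≤ i ≤ r`, `J ≥ 0`, and every `d ≥ J + 1`: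
`ℬ_{r,i,J}(q) = Σ_{j=1}^{r} B^J_{i,j,(r-1)d+j} · H_{r-j+1,d+1}(q)` in `ℚ[[q]]`. -/
theorem Bseries_coefB_recursion (r i J d : ℕ) (hr : 2 ≤ r) (hi1 : 1 ≤ i) (hir : i ≤ r)
    (hd : J + 1 ≤ d) :
    Bseries r i J = ∑ j ∈ Finset.Icc 1 r,
      coefB r i J (d - (J+1)) j * Hseries r (r - j + 1) (d+1) := by
  rw [Bseries_eq, aux_main r i J hi1 hir (d - (J+1))]
  refine Finset.sum_congr rfl fun j hj => ?_
  rw [show J+1+(d-(J+1))+1 = d+1 by omega]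
end

section
/- For all integers r ≥ 2, 1 ≤ i ≤ r, J ≥ 0, every integer d ≥ J + 1, and every 1 ≤ j ≤ r, the power series B^J_{i,j,(r−1)d+j} is divisible by q^{d(j−1)} in ℚ[[q]] (i.e., its coefficient of q^n vanishes for all n < d(j−1)); consequently, for each 2 ≤ j ≤ r and each n ≥ 0, the coefficient of q^n in B^J_{i,j,(r−1)d+j} is zero for all sufficiently large d, so B^J_{i,j,(r−1)d+j} tends to 0 in the q-adic topology as d → ∞. -/
open PowerSeries Finset

lemma coefB_dvd (r i J e j : ℕ) :
    (PowerSeries.X : PowerSeries ℚ) ^ ((J+1+e)*(j-1)) ∣ coefB r i J e j := by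
  cases e with
  | zero =>
      simp only [coefB]
      split
      · simp
      · exact dvd_zero _
  | succ e => exact Dvd.intro _ rfl

/-- For `r ≥ 2`, `1 ≤ i ≤ r`, `J ≥ 0`, every `d ≥ J + 1` and `1 ≤ j ≤ r`:
`q^{d(j-1)} ∣ B^J_{i,j,(r-1)d+j}` (i.e. the coefficient of `qⁿ` vanishes for `n < d(j-1)`);
consequently for each `2 ≤ j ≤ r` and each `n`, the coefficient of `qⁿ` in
`B^J_{i,j,(r-1)d+j}` is zero for all sufficiently large `d`. -/
theorem coefB_qadic_limit (r i J : ℕ) (hr : 2 ≤ r) (hi1 : 1 ≤ i) (hir : i ≤ r) :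
    (∀ d, J + 1 ≤ d → ∀ j, 1 ≤ j → j ≤ r →
      ((PowerSeries.X : PowerSeries ℚ) ^ (d*(j-1)) ∣ coefB r i J (d - (J+1)) j) ∧
      (∀ n : ℕ, n < d*(j-1) → PowerSeries.coeff n (coefB r i J (d - (J+1)) j) = 0)) ∧
    (∀ j, 2 ≤ j → j ≤ r → ∀ n : ℕ, ∃ N : ℕ, ∀ d, N ≤ d →
      PowerSeries.coeff n (coefB r i J (d - (J+1)) j) = 0) := by
  have key : ∀ d, J + 1 ≤ d → ∀ j,
      (PowerSeries.X : PowerSeries ℚ) ^ (d*(j-1)) ∣ coefB r i J (d - (J+1)) j := by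
    intro d hd j
    obtain ⟨e, rfl⟩ := Nat.exists_eq_add_of_le hd
    have h : J + 1 + e - (J + 1) = e := by omega
    rw [h]
    exact coefB_dvd r i J e j
  have key2 : ∀ d, J + 1 ≤ d → ∀ j, ∀ n : ℕ, n < d*(j-1) →
      PowerSeries.coeff n (coefB r i J (d - (J+1)) j) = 0 := by
    intro d hd j n hn
    exact (PowerSeries.X_pow_dvd_iff.mp (key d hd j)) n hn
  refine ⟨fun d hd j _ _ => ⟨key d hd j, fun n hn => key2 d hd j n hn⟩, ?_⟩
  intro j hj2 hjr n
  refine ⟨J + 2 + n, fun d hd => ?_⟩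
  refine key2 d (by omega) j n ?_
  calc n < d := by omega
    _ = d * 1 := (Nat.mul_one d).symm
    _ ≤ d * (j - 1) := Nat.mul_le_mul_left d (by omega)
end

section
/- For all integers r ≥ 2, 1 ≤ i ≤ r, and J ≥ 0, the sequence (B^J_{i,1,(r−1)d+1})_{d ≥ J+1} converges to ℬ_{r,i,J}(q) in the q-adic topology on ℚ[[q]]; that is, for every n ≥ 0 there exists N such that for all d ≥ N the coefficient of q^n in B^J_{i,1,(r−1)d+1} equals B_{r,i,J}(n). -/
open PowerSeries Finset

/-- The combinatorial condition counted by `coefB r i J e j`: Gordon condition, parts in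
`(J, J+1+e]`, at most `i-1` parts equal to `J+1`, exactly `j-1` parts equal to `J+1+e`. -/
def SetCond (r i J e j : ℕ) {n : ℕ} (p : Nat.Partition n) : Prop :=
  GordonCond r p ∧ (∀ x ∈ p.parts, J < x) ∧ Multiset.count (J+1) p.parts ≤ i - 1 ∧
  (∀ x ∈ p.parts, x ≤ J+1+e) ∧ Multiset.count (J+1+e) p.parts = j - 1

open Classical in
/-- The finset of partitions of `n` satisfying `SetCond`. -/
noncomputable def Sfin (r i J e j n : ℕ) : Finset (Nat.Partition n) :=
  Finset.univ.filter (SetCond r i J e j)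

open Classical in
/-- Variant with `≤ r - j` parts equal to `J+1+e` instead of exactly `j-1`. -/
noncomputable def Tfin (r i J e j n : ℕ) : Finset (Nat.Partition n) :=
  Finset.univ.filter (fun p => GordonCond r p ∧ (∀ x ∈ p.parts, J < x) ∧
    Multiset.count (J+1) p.parts ≤ i - 1 ∧
    (∀ x ∈ p.parts, x ≤ J+1+e) ∧ Multiset.count (J+1+e) p.parts ≤ r - j)

lemma mem_Sfin {r i J e j n : ℕ} {p : Nat.Partition n} :
    p ∈ Sfin r i J e j n ↔ SetCond r i J e j p := by
  classical simp [Sfin]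

lemma mem_Tfin {r i J e j n : ℕ} {p : Nat.Partition n} :
    p ∈ Tfin r i J e j n ↔ (GordonCond r p ∧ (∀ x ∈ p.parts, J < x) ∧
    Multiset.count (J+1) p.parts ≤ i - 1 ∧
    (∀ x ∈ p.parts, x ≤ J+1+e) ∧ Multiset.count (J+1+e) p.parts ≤ r - j) := by
  classical simp [Tfin]

lemma multiset_le_sum_of_mem {s : Multiset ℕ} {x : ℕ} (h : x ∈ s) : x ≤ s.sum := by
  obtain ⟨t, rfl⟩ := Multiset.exists_cons_of_mem h
  simp

/-- Base case: count for `e = 0`. -/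
lemma Sfin_zero_card (r i J j n : ℕ) (hi : 1 ≤ i) (hj1 : 1 ≤ j) (hjr : j ≤ r) :
    (Sfin r i J 0 j n).card = if j ≤ i ∧ n = (J+1)*(j-1) then 1 else 0 := by
  classical
  have hparts : ∀ p : Nat.Partition n, SetCond r i J 0 j p →
      p.parts = Multiset.replicate (j-1) (J+1) := by
    intro p ⟨hg, hJ, hi1, hle, hcnt⟩
    have hall : ∀ x ∈ p.parts, x = J + 1 := by
      intro x hx; have := hJ x hx; have := hle x hx; omega
    have hcard : Multiset.card p.parts = j - 1 := by
      rw [← hcnt]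
      · exact (Multiset.count_eq_card.2 (fun x hx => (hall x hx).symm)).symm
    rw [Multiset.eq_replicate]
    exact ⟨hcard, hall⟩
  split_ifs with h
  · obtain ⟨hji, hn⟩ := h
    rw [Finset.card_eq_one]
    refine ⟨⟨Multiset.replicate (j-1) (J+1), ?_, ?_⟩, ?_⟩
    · intro x hx; rw [Multiset.eq_of_mem_replicate hx]; omega
    · rw [Multiset.sum_replicate, smul_eq_mul, hn]; ring
    · apply Finset.eq_singleton_iff_unique_mem.2
      constructor
      · rw [mem_Sfin]
        refine ⟨?_, ?_, ?_, ?_, ?_⟩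
        · intro a ha
          simp only [Multiset.count_replicate]
          split_ifs <;> omega
        · intro x hx; rw [Multiset.eq_of_mem_replicate hx]; omega
        · rw [Multiset.count_replicate_self]; omega
        · intro x hx; rw [Multiset.eq_of_mem_replicate hx]
        · simp [Multiset.count_replicate]
      · intro p hp
        exact Nat.Partition.ext (hparts p (mem_Sfin.1 hp))
  · rw [Finset.card_eq_zero, Finset.eq_empty_iff_forall_notMem]
    intro p hp
    have hc := mem_Sfin.1 hp
    have hrep := hparts p hc
    obtain ⟨hg, hJ, hi1, hle, hcnt⟩ := hc
    apply h
    constructor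
    · rw [hrep, Multiset.count_replicate_self] at hi1
      omega
    · have := p.parts_sum
      rw [hrep, Multiset.sum_replicate, smul_eq_mul] at this
      rw [← this, Nat.mul_comm]

/-- The fiberwise decomposition of `Tfin` into the `Sfin`s. -/
lemma Tfin_card (r i J e j n : ℕ) (hj1 : 1 ≤ j) (hjr : j ≤ r) :
    (Tfin r i J e j n).card = ∑ m ∈ Finset.Icc 1 (r - j + 1), (Sfin r i J e m n).card := by
  classical
  rw [Finset.card_eq_sum_card_fiberwise
    (f := fun p => Multiset.count (J+1+e) p.parts + 1) (t := Finset.Icc 1 (r - j + 1))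
    (fun p hp => by
      have := (mem_Tfin.1 hp).2.2.2.2
      simp only [Finset.mem_coe, Finset.mem_Icc]; omega)]
  refine Finset.sum_congr rfl (fun m hm => ?_)
  rw [Finset.mem_Icc] at hm
  congr 1
  ext p
  simp only [Finset.mem_filter, mem_Tfin, mem_Sfin, SetCond]
  constructor
  · rintro ⟨⟨h1, h2, h3, h4, h5⟩, h6⟩
    exact ⟨h1, h2, h3, h4, by omega⟩
  · rintro ⟨h1, h2, h3, h4, h5⟩
    exact ⟨⟨h1, h2, h3, h4, by omega⟩, by omega⟩

/-- The bijection: removing the `j-1` parts equal to `D = J+2+e`. -/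
lemma Sfin_succ_card (r i J e j n : ℕ) (hj1 : 1 ≤ j) (hjr : j ≤ r) :
    (Sfin r i J (e+1) j (n + (J+1+(e+1))*(j-1))).card = (Tfin r i J e j n).card := by
  classical
  set D := J+1+(e+1) with hD
  refine Finset.card_bij'
    (i := fun p hp => ⟨p.parts.filter (· ≠ D), ?_, ?_⟩)
    (j := fun q hq => ⟨q.parts + Multiset.replicate (j-1) D, ?_, ?_⟩)
    ?_ ?_ ?_ ?_
  · -- parts_pos for forward map
    intro x hx
    exact p.parts_pos (Multiset.mem_of_mem_filter hx)
  · -- parts_sum for forward map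
    obtain ⟨hg, hJ, hi1, hle, hcnt⟩ := mem_Sfin.1 hp
    have hsplit := Multiset.filter_add_not (fun x => x = D) p.parts
    have heqD : p.parts.filter (fun x => x = D) = Multiset.replicate (j-1) D := by
      rw [Multiset.filter_eq', hcnt]
    have hsum : (p.parts.filter (fun x => x = D)).sum
        + (p.parts.filter (fun x => ¬ x = D)).sum = n + D*(j-1) := by
      rw [← Multiset.sum_add, hsplit, p.parts_sum]
    rw [heqD, Multiset.sum_replicate, smul_eq_mul] at hsum
    have : (p.parts.filter (fun x => ¬ x = D)).sum = n := by
      have : (j-1) * D = D * (j-1) := mul_comm _ _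
      omega
    simpa [Ne] using this
  · -- parts_pos for backward map
    intro x hx
    rcases Multiset.mem_add.1 hx with h | h
    · exact q.parts_pos h
    · rw [Multiset.eq_of_mem_replicate h]; omega
  · -- parts_sum for backward map
    rw [Multiset.sum_add, q.parts_sum, Multiset.sum_replicate, smul_eq_mul, mul_comm]
  · -- forward map lands in Tfin
    intro p hp
    obtain ⟨hg, hJ, hi1, hle, hcnt⟩ := mem_Sfin.1 hp
    rw [mem_Tfin]
    have hcf : ∀ a : ℕ, Multiset.count a (p.parts.filter (· ≠ D)) =
        if a = D then 0 else Multiset.count a p.parts := by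
      intro a
      rw [Multiset.count_filter]
      by_cases h : a = D
      · simp [h]
      · simp [h]
    refine ⟨?_, ?_, ?_, ?_, ?_⟩
    · intro a ha
      have hga := hg a ha
      show Multiset.count a (p.parts.filter (· ≠ D)) +
        Multiset.count (a+1) (p.parts.filter (· ≠ D)) ≤ r - 1
      rw [hcf, hcf]
      split_ifs <;> omega
    · intro x hx; exact hJ x (Multiset.mem_of_mem_filter hx)
    · show Multiset.count (J+1) (p.parts.filter (· ≠ D)) ≤ i - 1
      rw [hcf]; split_ifs with h <;> omega
    · intro x hx
      have h1 := hle x (Multiset.mem_of_mem_filter hx)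
      have h2 : x ≠ D := by
        have := Multiset.of_mem_filter hx; simpa using this
      omega
    · show Multiset.count (J+1+e) (p.parts.filter (· ≠ D)) ≤ r - j
      rw [hcf]
      split_ifs with h
      · omega
      · have hg' := hg (J+1+e) (by omega)
        have h2 : Multiset.count (J+1+e+1) p.parts = j - 1 := hcnt
        omega
  · -- backward map lands in Sfin
    intro q hq
    obtain ⟨hg, hJ, hi1, hle, hcnt⟩ := mem_Tfin.1 hq
    rw [mem_Sfin]
    have hDnot : Multiset.count D q.parts = 0 := by
      rw [Multiset.count_eq_zero]
      intro hmem
      have := hle D hmem; omega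
    have hca : ∀ a : ℕ, Multiset.count a (q.parts + Multiset.replicate (j-1) D) =
        Multiset.count a q.parts + if a = D then j - 1 else 0 := by
      intro a
      rw [Multiset.count_add, Multiset.count_replicate]
      congr 1
      by_cases h : a = D
      · subst h; simp
      · rw [if_neg (fun hh => h hh.symm), if_neg h]
    refine ⟨?_, ?_, ?_, ?_, ?_⟩
    · intro a ha
      have h1 := hca a; have h2 := hca (a+1)
      have hgq := hg a ha
      by_cases e1 : a = D
      · have : Multiset.count a q.parts = 0 := e1 ▸ hDnot
        have h3 : Multiset.count (a+1) q.parts = 0 := by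
          rw [Multiset.count_eq_zero]; intro hmem; have := hle _ hmem; omega
        rw [h1, h2, if_pos e1, if_neg (by omega), this, h3]; omega
      · by_cases e2 : a + 1 = D
        · have ha' : a = J + 1 + e := by omega
          have : Multiset.count a q.parts ≤ r - j := ha' ▸ hcnt
          have h4 : Multiset.count (a+1) q.parts = 0 := e2 ▸ hDnot
          rw [h1, h2, if_neg e1, if_pos e2, h4]; omega
        · rw [h1, h2, if_neg e1, if_neg e2]; omega
    · intro x hx
      rcases Multiset.mem_add.1 hx with h | h
      · exact hJ x h
      · rw [Multiset.eq_of_mem_replicate h]; omega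
    · rw [hca, if_neg (by omega)]; omega
    · intro x hx
      rcases Multiset.mem_add.1 hx with h | h
      · have := hle x h; omega
      · rw [Multiset.eq_of_mem_replicate h]
    · rw [hca, if_pos rfl, hDnot]
      omega
  · -- left inverse
    intro p hp
    dsimp only
    obtain ⟨hg, hJ, hi1, hle, hcnt⟩ := mem_Sfin.1 hp
    apply Nat.Partition.ext
    show p.parts.filter (· ≠ D) + Multiset.replicate (j-1) D = p.parts
    have heqD : p.parts.filter (fun x => x = D) = Multiset.replicate (j-1) D := by
      rw [Multiset.filter_eq', hcnt]
    have hsplit := Multiset.filter_add_not (fun x => x = D) p.parts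
    calc p.parts.filter (· ≠ D) + Multiset.replicate (j-1) D
        = p.parts.filter (fun x => ¬ x = D) + p.parts.filter (fun x => x = D) := by
          rw [heqD]
      _ = p.parts := by rw [add_comm]; exact hsplit
  · -- right inverse
    intro q hq
    dsimp only
    obtain ⟨hg, hJ, hi1, hle, hcnt⟩ := mem_Tfin.1 hq
    apply Nat.Partition.ext
    show (q.parts + Multiset.replicate (j-1) D).filter (· ≠ D) = q.parts
    rw [Multiset.filter_add]
    have h1 : q.parts.filter (· ≠ D) = q.parts := by
      rw [Multiset.filter_eq_self]
      intro x hx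
      have := hle x hx
      simp only [ne_eq]; omega
    have h2 : (Multiset.replicate (j-1) D).filter (· ≠ D) = 0 := by
      rw [Multiset.filter_eq_nil]
      intro x hx
      simp [Multiset.eq_of_mem_replicate hx]
    rw [h1, h2, add_zero]

/-- Partitions counted by `Sfin (e+1) j` have `n ≥ (J+2+e)(j-1)`. -/
lemma Sfin_succ_empty (r i J e j n : ℕ) (hn : n < (J+1+(e+1))*(j-1)) :
    (Sfin r i J (e+1) j n).card = 0 := by
  classical
  rw [Finset.card_eq_zero, Finset.eq_empty_iff_forall_notMem]
  intro p hp
  obtain ⟨hg, hJ, hi1, hle, hcnt⟩ := mem_Sfin.1 hp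
  set D := J+1+(e+1) with hD
  have heqD : p.parts.filter (fun x => x = D) = Multiset.replicate (j-1) D := by
    rw [Multiset.filter_eq', hcnt]
  obtain ⟨u, hu⟩ := Multiset.le_iff_exists_add.1
    (Multiset.filter_le (fun x => x = D) p.parts)
  have hle' : (p.parts.filter (fun x => x = D)).sum ≤ p.parts.sum := by
    conv_rhs => rw [hu]
    rw [Multiset.sum_add]
    omega
  rw [heqD, Multiset.sum_replicate, smul_eq_mul, p.parts_sum] at hle'
  have : (j-1) * D = D * (j-1) := mul_comm _ _
  omega

/-- Main identity: the coefficients of `coefB` count the partitions in `Sfin`. -/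
lemma coeff_coefB (r i J : ℕ) (hi : 1 ≤ i) :
    ∀ e j n : ℕ, 1 ≤ j → j ≤ r →
      PowerSeries.coeff n (coefB r i J e j) = ((Sfin r i J e j n).card : ℚ) := by
  intro e
  induction e with
  | zero =>
    intro j n hj1 hjr
    rw [coefB, Sfin_zero_card r i J j n hi hj1 hjr]
    by_cases h1 : j ≤ i
    · rw [if_pos h1, PowerSeries.coeff_X_pow]
      by_cases h2 : n = (J+1)*(j-1)
      · rw [if_pos h2, if_pos ⟨h1, h2⟩]; norm_num
      · rw [if_neg h2, if_neg (fun hh => h2 hh.2)]; norm_num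
    · rw [if_neg h1, if_neg (fun hh => h1 hh.1), map_zero]
      norm_num
  | succ e ih =>
    intro j n hj1 hjr
    rw [coefB, PowerSeries.coeff_X_pow_mul']
    split_ifs with h
    · obtain ⟨n', rfl⟩ : ∃ n', n = n' + (J+1+(e+1))*(j-1) :=
        ⟨n - (J+1+(e+1))*(j-1), by omega⟩
      rw [Nat.add_sub_cancel]
      rw [map_sum]
      rw [Sfin_succ_card r i J e j n' hj1 hjr, Tfin_card r i J e j n' hj1 hjr]
      rw [Nat.cast_sum]
      refine Finset.sum_congr rfl (fun m hm => ?_)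
      rw [Finset.mem_Icc] at hm
      exact ih m n' hm.1 (by omega)
    · rw [Sfin_succ_empty r i J e j n (by omega)]
      norm_num

/-- For `r ≥ 2`, `1 ≤ i ≤ r`, `J ≥ 0`: the sequence `(B^J_{i,1,(r-1)d+1})_{d ≥ J+1}`
converges to `ℬ_{r,i,J}(q)` in the `q`-adic topology: for every `n` there is `N` such that
for all `d ≥ N` the coefficient of `qⁿ` in `B^J_{i,1,(r-1)d+1}` equals `B_{r,i,J}(n)`. -/
theorem coefB_tendsto_B (r i J : ℕ) (hr : 2 ≤ r) (hi1 : 1 ≤ i) (hir : i ≤ r) :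
    ∀ n : ℕ, ∃ N : ℕ, ∀ d, N ≤ d →
      PowerSeries.coeff n (coefB r i J (d - (J+1)) 1) = (BCount r i J n : ℚ) := by
  classical
  intro n
  refine ⟨J + 1 + n, fun d hd => ?_⟩
  set e := d - (J+1) with he
  have hen : n ≤ e := by omega
  rw [coeff_coefB r i J hi1 e 1 n le_rfl (by omega)]
  have hcard : (Sfin r i J e 1 n).card = BCount r i J n := by
    rw [BCount, Nat.card_eq_fintype_card, Fintype.card_subtype]
    congr 1
    ext p
    simp only [mem_Sfin, SetCond, Finset.mem_filter, Finset.mem_univ, true_and]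
    constructor
    · rintro ⟨h1, h2, h3, h4, h5⟩
      exact ⟨h1, h2, h3⟩
    · rintro ⟨h1, h2, h3⟩
      have hbd : ∀ x ∈ p.parts, x ≤ n := by
        intro x hx
        have := multiset_le_sum_of_mem hx
        rw [p.parts_sum] at this
        exact this
      refine ⟨h1, h2, h3, fun x hx => by have := hbd x hx; omega, ?_⟩
      rw [Multiset.count_eq_zero]
      intro hmem
      have := hbd _ hmem; omega
  rw [hcard]
end
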